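/- arXiv:1909.12143 — 14 statements merged into one kernel-verified Lean document; each statement's English description precedes it below -/
import Mathlib

section
/- For all nonnegative integers a and b and any element x of a commutative ring, (T_{a+b}(x) - 1) * (T_{|a-b|}(x) - 1) = (T_a(x) - T_b(x))^2, where T_n denotes the n-th Chebyshev polynomial of the first kind. -/
/-!
Expanding the left side, the identity amounts to `T (m + n) * T (m - n) = T m ^ 2 + T n ^ 2 - 1`
together with the product formula `2 * T m * T n = T (m + n) + T (m - n)`. The former is twice
the product formula applied to `m + n` and `m - n`, using `T (2 * k) = 2 * T k ^ 2 - 1`; the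
factor `2` is cancelled in `ℤ[X]` and the identity is then transported to any commutative ring.
-/

open Polynomial Polynomial.Chebyshev

namespace Polynomial.Chebyshev

variable (R : Type*) [CommRing R]

theorem T_abs (n : ℤ) : T R |n| = T R n := by
  rcases abs_choice n with h | h <;> rw [h]
  exact T_neg R n

theorem T_two_mul (n : ℤ) : T R (2 * n) = 2 * T R n ^ 2 - 1 := by
  rw [T_mul, T_two]
  simp

theorem T_add_mul_T_sub (m n : ℤ) : T R (m + n) * T R (m - n) = T R m ^ 2 + T R n ^ 2 - 1 := by
  have hℤ : T ℤ (m + n) * T ℤ (m - n) = T ℤ m ^ 2 + T ℤ n ^ 2 - 1 := by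
    have h2 : (2 : ℤ[X]) ≠ 0 := two_ne_zero
    apply mul_left_cancel₀ h2
    have hprod := T_mul_T ℤ (m + n) (m - n)
    rw [show m + n + (m - n) = 2 * m by ring, show m + n - (m - n) = 2 * n by ring,
      T_two_mul, T_two_mul] at hprod
    linear_combination hprod
  simpa using congrArg (map (Int.castRingHom R)) hℤ

theorem T_add_sub_one_mul_T_sub_sub_one (m n : ℤ) :
    (T R (m + n) - 1) * (T R (m - n) - 1) = (T R m - T R n) ^ 2 := by
  linear_combination T_add_mul_T_sub R m n + T_mul_T R m n

end Polynomial.Chebyshev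

theorem chebyshev_prod_identity (R : Type*) [CommRing R] (a b : ℕ) (x : R) :
    ((T R (a + b)).eval x - 1) * ((T R |(a : ℤ) - b|).eval x - 1)
      = ((T R a).eval x - (T R b).eval x) ^ 2 := by
  rw [T_abs]
  simpa using congrArg (eval x) (T_add_sub_one_mul_T_sub_sub_one R a b)
end

section
/- For every odd prime p and every integer x, either T_{p-1}(x) ≡ 1 (mod p) or T_{p+1}(x) ≡ 1 (mod p), where T_n is the n-th Chebyshev polynomial of the first kind. -/
open Polynomial Polynomial.Chebyshev

lemma cheb_zpow {K : Type*} [Field K] {u y : K} (hu : u ≠ 0) (h : u + u⁻¹ = 2 * y) (n : ℤ) :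
    2 * (T K n).eval y = u ^ n + (u ^ n)⁻¹ := by
  induction n using Polynomial.Chebyshev.induct with
  | zero => norm_num
  | one => simpa using h.symm
  | add_two k ih1 ih2 =>
    rw [T_add_two]
    have e1 : u ^ ((k : ℤ) + 2) = u ^ (k : ℤ) * u * u := by
      rw [zpow_add₀ hu, zpow_two]; ring
    have e2 : u ^ ((k : ℤ) + 1) = u ^ (k : ℤ) * u := by
      rw [zpow_add_one₀ hu]
    rw [e2] at ih1
    rw [e1]
    simp only [eval_sub, eval_mul, eval_ofNat, eval_X]
    linear_combination (-2 * (T K ((k:ℤ)+1)).eval y) * h + (u + u⁻¹) * ih1 - ih2 +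
      (u ^ (k:ℤ) + (u ^ (k:ℤ))⁻¹) * (mul_inv_cancel₀ hu)
  | neg_add_one k ih1 ih2 =>
    have e : T K (-(k:ℤ) - 1) = 2 * X * T K (-(k:ℤ)) - T K (-(k:ℤ)+1) := by
      have e0 := T_sub_two K (-(k:ℤ)+1)
      rw [show -(k:ℤ)+1-2 = -(k:ℤ)-1 by ring, show -(k:ℤ)+1-1 = -(k:ℤ) by ring] at e0
      exact e0
    rw [e, zpow_sub_one₀ hu, mul_inv, inv_inv]
    rw [zpow_add_one₀ hu] at ih2
    simp only [eval_sub, eval_mul, eval_ofNat, eval_X]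
    linear_combination (-2 * (T K (-(k:ℤ))).eval y) * h + (u + u⁻¹) * ih1 - ih2

theorem chebyshev_little_fermat (p : ℕ) (hp : p.Prime) (hodd : Odd p) (x : ℤ) :
    (T ℤ ((p : ℤ) - 1)).eval x ≡ 1 [ZMOD p] ∨ (T ℤ ((p : ℤ) + 1)).eval x ≡ 1 [ZMOD p] := by
  haveI : Fact p.Prime := ⟨hp⟩
  set F := AlgebraicClosure (ZMod p)
  haveI : CharP F p := charP_of_injective_algebraMap (algebraMap (ZMod p) F).injective p
  set f : ZMod p →+* F := algebraMap (ZMod p) F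
  set y : F := f (x : ZMod p) with hy
  -- transfer lemma
  have trans : ∀ n : ℤ, f (((T ℤ n).eval x : ℤ) : ZMod p) = (T F n).eval y := by
    intro n
    have h1 : (((T ℤ n).eval x : ℤ) : ZMod p) = (T (ZMod p) n).eval ((x : ZMod p)) := by
      rw [← map_T (Int.castRingHom (ZMod p)) n, eval_map]
      exact (eval₂_hom (Int.castRingHom (ZMod p)) x).symm
    rw [h1, ← map_T f n, eval_map]
    exact (eval₂_hom f ((x : ZMod p))).symm
  have hp2 : p ≠ 2 := by
    intro h2
    rw [h2] at hodd
    exact (by norm_num : ¬ Odd 2) hodd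
  have two_ne : (2 : F) ≠ 0 := by
    intro h2
    have hd : p ∣ 2 := (CharP.cast_eq_zero_iff F p 2).mp (by exact_mod_cast h2)
    exact hp2 ((Nat.prime_dvd_prime_iff_eq hp Nat.prime_two).mp hd)
  -- construct u
  obtain ⟨s, hs⟩ : ∃ s : F, s ^ 2 = y ^ 2 - 1 :=
    IsAlgClosed.exists_pow_nat_eq (y ^ 2 - 1) (by norm_num)
  set u : F := y + s with hu_def
  have huinv : u * (2 * y - u) = 1 := by
    have : u * (2 * y - u) = y ^ 2 - s ^ 2 := by ring
    rw [this, hs]; ring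
  have hu : u ≠ 0 := left_ne_zero_of_mul_eq_one huinv
  have hinv : u⁻¹ = 2 * y - u := inv_eq_of_mul_eq_one_right huinv
  have h2y : u + u⁻¹ = 2 * y := by rw [hinv]; ring
  have hq : u ^ 2 - 2 * y * u + 1 = 0 := by linear_combination -huinv
  -- Frobenius
  have h2yp : (2 * y) ^ p = 2 * y := by
    have : (2 : F) * y = f (2 * (x : ZMod p)) := by rw [map_mul, map_ofNat]
    rw [this, ← map_pow, ZMod.pow_card]
  have hfrob : (u ^ p) ^ 2 - 2 * y * u ^ p + 1 = 0 := by
    have h0 : (u ^ 2 - 2 * y * u + 1) ^ p = 0 := by rw [hq]; exact zero_pow hp.ne_zero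
    rw [add_pow_char, sub_pow_char, mul_pow, h2yp, one_pow] at h0
    have hcomm : (u ^ 2) ^ p = (u ^ p) ^ 2 := by rw [← pow_mul, mul_comm, pow_mul]
    rw [hcomm] at h0
    exact h0
  have hsplit : (u ^ p - u) * (u ^ p - u⁻¹) = 0 := by
    rw [hinv]
    linear_combination hfrob - hq
  have key := fun n => cheb_zpow hu h2y n
  rcases mul_eq_zero.mp hsplit with hcase | hcase
  · left
    have hup : u ^ p = u := sub_eq_zero.mp hcase
    have hz : u ^ ((p : ℤ) - 1) = 1 := by
      rw [zpow_sub_one₀ hu, zpow_natCast, hup, mul_inv_cancel₀ hu]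
    have := key ((p : ℤ) - 1)
    rw [hz] at this
    norm_num at this
    have h1 : (T F ((p:ℤ) - 1)).eval y = 1 := by
      have := mul_left_cancel₀ two_ne (by rw [this]; norm_num : 2 * (T F ((p:ℤ)-1)).eval y = 2 * 1)
      exact this
    rw [← ZMod.intCast_eq_intCast_iff]
    apply f.injective
    rw [trans ((p:ℤ) - 1), h1]
    simp
  · right
    have hup : u ^ p = u⁻¹ := sub_eq_zero.mp hcase
    have hz : u ^ ((p : ℤ) + 1) = 1 := by
      rw [zpow_add_one₀ hu, zpow_natCast, hup, inv_mul_cancel₀ hu]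
    have := key ((p : ℤ) + 1)
    rw [hz] at this
    norm_num at this
    have h1 : (T F ((p:ℤ) + 1)).eval y = 1 := by
      have := mul_left_cancel₀ two_ne (by rw [this]; norm_num : 2 * (T F ((p:ℤ)+1)).eval y = 2 * 1)
      exact this
    rw [← ZMod.intCast_eq_intCast_iff]
    apply f.injective
    rw [trans ((p:ℤ) + 1), h1]
    simp
end

section
/- Let p be a prime, x an integer, and suppose m is the minimal positive integer with T_m(x) ≡ 1 (mod p). Then for any positive integer n, T_n(x) ≡ 1 (mod p) if and only if m divides n. -/
open Polynomial Polynomial.Chebyshev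

/-!
For odd `p`, pass to an algebraically closed field `K` of characteristic `p` and pick `u, v ∈ K`
with `u v = 1` and `u + v = 2x`; then `2 T_n(x) = u^n + u^{-n}`, and since `2 ≠ 0` in `K` this
equals `2` exactly when `(u^n - 1)^2 = 0`. So `T_n(x) ≡ 1 (mod p)` iff `u^n = 1`, and `m` is the
multiplicative order of `u`. For `p = 2` the recursion gives `T_{n+2} ≡ T_n`, so `T_n(x) ≡ 1`
iff `x` is odd or `n` is even, which is `g^n = 1` for `g = 1` resp. `g = -1` in `ℤ`.
-/

theorem orderOf_eq_of_isLeast {M : Type*} [Monoid M] {g : M} {m : ℕ}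
    (hm : IsLeast {k : ℕ | 0 < k ∧ g ^ k = 1} m) : orderOf g = m :=
  le_antisymm (orderOf_le_of_pow_eq_one hm.1.1 hm.1.2)
    (hm.2 ⟨(isOfFinOrder_iff_pow_eq_one.mpr ⟨m, hm.1⟩).orderOf_pos, pow_orderOf_eq_one g⟩)

theorem dvd_iff_of_isLeast_of_iff_pow_eq_one {M : Type*} [Monoid M] {g : M} {P : ℕ → Prop}
    (hP : ∀ k, P k ↔ g ^ k = 1) {m : ℕ} (hm : IsLeast {k : ℕ | 0 < k ∧ P k} m) (n : ℕ) :
    P n ↔ m ∣ n := by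
  simp only [hP] at hm ⊢
  rw [← orderOf_eq_of_isLeast hm, orderOf_dvd_iff_pow_eq_one]

namespace Polynomial.Chebyshev

theorem T_eval_intCast_modEq_one_iff (R : Type*) [CommRing R] (p : ℕ) [CharP R p] (x n : ℤ) :
    (T ℤ n).eval x ≡ 1 [ZMOD p] ↔ (T R n).eval (x : R) = 1 := by
  rw [← map_T (Int.castRingHom R), eval_intCast_map, eq_intCast, Int.cast_id,
    ← Int.cast_one (R := R), CharP.intCast_eq_intCast R p]

theorem T_of_charTwo {R : Type*} [CommRing R] [CharP R 2] (n : ℕ) :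
    T R n = if Even n then 1 else X := by
  induction n using Nat.twoStepInduction with
  | zero => simp
  | one => simp
  | more n ih _ =>
    have h2 : (2 : R[X]) = 0 := by simpa using CharP.cast_eq_zero R[X] 2
    rw [Nat.cast_add, Nat.cast_two, T_add_two, h2, zero_mul, zero_mul, zero_sub,
      CharTwo.neg_eq, ih]
    simp [Nat.even_add]

theorem exists_T_eval_modEq_two_iff (x : ℤ) :
    ∃ g : ℤ, ∀ n : ℕ, (T ℤ n).eval x ≡ 1 [ZMOD 2] ↔ g ^ n = 1 := by
  simp only [← Nat.cast_two (R := ℤ), T_eval_intCast_modEq_one_iff (ZMod 2), T_of_charTwo]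
  rcases Int.even_or_odd x with hx | hx
  · have h := ZMod.intCast_eq_zero_iff_even.mpr hx
    refine ⟨-1, fun n ↦ ?_⟩
    split_ifs with hn <;> simp [neg_one_pow_eq_one_iff_even, h, hn]
  · have h := ZMod.intCast_eq_one_iff_odd.mpr hx
    exact ⟨1, fun n ↦ by split_ifs <;> simp [h]⟩

theorem two_mul_T_eval_eq_pow_add_pow {R : Type*} [CommRing R] {u v c : R} (huv : u * v = 1)
    (hc : u + v = 2 * c) (n : ℕ) : 2 * (T R n).eval c = u ^ n + v ^ n := by
  rw [← dickson_one_one_eval_add_inv u v huv, dickson_one_one_eq_chebyshev_C, hc]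
  simpa using congrArg (eval c) (C_comp_two_mul_X R n).symm

theorem T_eval_eq_one_iff_pow_eq_one {R : Type*} [CommRing R] [IsDomain R] [NeZero (2 : R)]
    {u v c : R} (huv : u * v = 1) (hc : u + v = 2 * c) (n : ℕ) :
    (T R n).eval c = 1 ↔ u ^ n = 1 := by
  have hpow : u ^ n * v ^ n = 1 := by rw [← mul_pow, huv, one_pow]
  rw [← mul_right_inj' (two_ne_zero (α := R)), two_mul_T_eval_eq_pow_add_pow huv hc, mul_one]
  constructor
  · intro h
    have : (u ^ n - 1) ^ 2 = 0 := by linear_combination u ^ n * h - hpow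
    exact sub_eq_zero.mp (pow_eq_zero_iff two_ne_zero |>.mp this)
  · intro h
    rw [h, one_mul] at hpow
    rw [h, hpow, one_add_one_eq_two]

theorem exists_mul_eq_one_add_eq_two_mul {K : Type*} [Field K] [IsAlgClosed K] (c : K) :
    ∃ u v : K, u * v = 1 ∧ u + v = 2 * c := by
  obtain ⟨s, hs⟩ := IsAlgClosed.exists_eq_mul_self (c ^ 2 - 1)
  exact ⟨c + s, c - s, by linear_combination hs, by ring⟩

end Polynomial.Chebyshev

theorem chebyshev_order_divides_general (p : ℕ) (hp : p.Prime) (x : ℤ) (m : ℕ)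
    (hm : IsLeast {k : ℕ | 0 < k ∧ (T ℤ k).eval x ≡ 1 [ZMOD p]} m) (n : ℕ) :
    (T ℤ n).eval x ≡ 1 [ZMOD p] ↔ m ∣ n := by
  rcases eq_or_ne p 2 with rfl | hp2
  · obtain ⟨g, hg⟩ := exists_T_eval_modEq_two_iff x
    exact dvd_iff_of_isLeast_of_iff_pow_eq_one hg hm n
  · have : Fact p.Prime := ⟨hp⟩
    let K := AlgebraicClosure (ZMod p)
    have : NeZero (2 : K) := ⟨Ring.two_ne_zero (by rwa [ringChar.eq K p])⟩
    obtain ⟨u, v, huv, hc⟩ := exists_mul_eq_one_add_eq_two_mul (x : K)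
    refine dvd_iff_of_isLeast_of_iff_pow_eq_one (g := u) (fun k ↦ ?_) hm n
    rw [T_eval_intCast_modEq_one_iff K p, T_eval_eq_one_iff_pow_eq_one huv hc]

theorem chebyshev_order_divides (p : ℕ) (hp : p.Prime) (x : ℤ) (m : ℕ)
    (hm : IsLeast {k : ℕ | 0 < k ∧ (T ℤ k).eval x ≡ 1 [ZMOD p]} m) (n : ℕ) (hn : 0 < n) :
    (T ℤ n).eval x ≡ 1 [ZMOD p] ↔ m ∣ n :=
  chebyshev_order_divides_general p hp x m hm n
end

section
/- Let p be an odd prime and x an integer, and let m be the minimal positive integer with T_m(x) ≡ 1 (mod p) (the Chebyshev order of x mod p). Then m divides p-1 or m divides p+1. In particular m is coprime to p. -/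
open Polynomial Polynomial.Chebyshev

theorem chebyshev_order_dvd_p_sub_one_or_add_one (p : ℕ) (hp : p.Prime) (hodd : Odd p)
    (x : ℤ) (m : ℕ)
    (hm : IsLeast {k : ℕ | 0 < k ∧ (T ℤ k).eval x ≡ 1 [ZMOD p]} m) :
    (m ∣ p - 1 ∨ m ∣ p + 1) ∧ Nat.Coprime m p := by
  haveI : Fact p.Prime := ⟨hp⟩
  have hple := hp.two_le
  have hp2 : p ≠ 2 := by rintro rfl; exact (Nat.not_odd_iff_even.mpr even_two) hodd
  set K := AlgebraicClosure (ZMod p) with hKdef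
  haveI : CharP K p := charP_of_injective_algebraMap (algebraMap (ZMod p) K).injective p
  have h2 : (2 : K) ≠ 0 := by
    intro h
    have := (CharP.cast_eq_zero_iff K p 2).mp (by exact_mod_cast h)
    rcases (Nat.prime_dvd_prime_iff_eq hp Nat.prime_two).mp this with rfl
    exact hp2 rfl
  haveI : Invertible (2 : K) := invertibleOfNonzero h2
  set a : K := algebraMap (ZMod p) K (x : ZMod p) with ha
  obtain ⟨s, hs⟩ := IsAlgClosed.exists_pow_nat_eq (k := K) (a ^ 2 - 1) zero_lt_two
  set u : K := a + s with hudef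
  set v : K := a - s with hvdef
  have huv : u * v = 1 := by
    have h' : u * v = a ^ 2 - s ^ 2 := by rw [hudef, hvdef]; ring
    rw [h', hs]; ring
  have hne : u ≠ 0 := left_ne_zero_of_mul_eq_one huv
  have hadd : u + v = 2 * a := by rw [hudef, hvdef]; ring
  -- key evaluation identity
  have hTeval : ∀ k : ℕ, (2 : K) * (T K k).eval a = u ^ k + v ^ k := by
    intro k
    have h1 := Polynomial.dickson_one_one_eval_add_inv u v huv k
    rw [hadd] at h1
    rw [Polynomial.chebyshev_T_eq_dickson_one_one K k]
    simp only [eval_mul, eval_C, eval_comp, eval_ofNat, eval_X]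
    rw [h1, ← mul_assoc, mul_invOf_self, one_mul]
  -- membership condition is equivalent to u^k = 1
  have hmem : ∀ k : ℕ, ((T ℤ (k : ℤ)).eval x ≡ 1 [ZMOD p]) ↔ u ^ k = 1 := by
    intro k
    have hc1 : (((T ℤ (k : ℤ)).eval x : ℤ) : ZMod p) = (T (ZMod p) (k : ℤ)).eval (x : ZMod p) := by
      rw [← Polynomial.Chebyshev.map_T (Int.castRingHom (ZMod p)) (k : ℤ),
        Polynomial.eval_intCast_map]
      rfl
    have hc2 : algebraMap (ZMod p) K ((T (ZMod p) (k : ℤ)).eval (x : ZMod p))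
        = (T K (k : ℤ)).eval a := by
      rw [ha, ← Polynomial.Chebyshev.map_T (algebraMap (ZMod p) K) (k : ℤ), eval_map,
        eval₂_at_apply]
    have hcast : ((T ℤ (k : ℤ)).eval x ≡ 1 [ZMOD p]) ↔ (T K (k : ℤ)).eval a = 1 := by
      rw [← ZMod.intCast_eq_intCast_iff, Int.cast_one, hc1]
      constructor
      · intro h; rw [← hc2, h, map_one]
      · intro h
        apply (algebraMap (ZMod p) K).injective
        rw [map_one, ← h, hc2]
    rw [hcast]
    have huvk : u ^ k * v ^ k = 1 := by rw [← mul_pow, huv, one_pow]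
    constructor
    · intro h
      have h2k : u ^ k + v ^ k = 2 := by rw [← hTeval k, h, mul_one]
      have h0 : (u ^ k - 1) ^ 2 = 0 := by linear_combination u ^ k * h2k - huvk
      have := pow_eq_zero_iff (two_ne_zero) |>.mp h0
      exact sub_eq_zero.mp this
    · intro h
      have hv : v ^ k = 1 := by rw [h, one_mul] at huvk; exact huvk
      apply mul_left_cancel₀ h2
      rw [hTeval k, h, hv]
      norm_num
  -- m is the order of u
  obtain ⟨⟨hmpos, hmmem⟩, hlb⟩ := hm
  have hum : u ^ m = 1 := (hmem m).mp hmmem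
  -- Frobenius: u^p = u or u^p = v
  have hu2 : u ^ 2 = 2 * a * u - 1 := by
    rw [hudef]; linear_combination hs
  have h2ap : (2 * a) ^ p = 2 * a := by
    have : (2 : K) * a = algebraMap (ZMod p) K (2 * (x : ZMod p)) := by
      rw [map_mul, map_ofNat, ha]
    rw [this, ← map_pow, ZMod.pow_card]
  have hfrob : (u ^ p) ^ 2 = 2 * a * u ^ p - 1 := by
    have hf := congrArg (frobenius K p) hu2
    rw [map_sub, map_mul, map_one, map_pow] at hf
    simp only [frobenius_def] at hf
    rw [h2ap] at hf
    exact hf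
  have hcases : u ^ p = u ∨ u ^ p = v := by
    have h0 : (u ^ p - u) * (u ^ p - v) = 0 := by
      linear_combination hfrob - u ^ p * hadd + huv
    rcases mul_eq_zero.mp h0 with h | h
    · exact Or.inl (sub_eq_zero.mp h)
    · exact Or.inr (sub_eq_zero.mp h)
  have hdvd : u ^ (p - 1) = 1 ∨ u ^ (p + 1) = 1 := by
    rcases hcases with h | h
    · left
      have : u ^ (p - 1) * u = u := by
        rw [← pow_succ, Nat.sub_add_cancel hp.one_lt.le, h]
      exact mul_right_cancel₀ hne (by rw [this, one_mul])
    · right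
      rw [pow_succ, h, mul_comm, huv]
  -- m = orderOf u
  have hfin : IsOfFinOrder u := by
    rcases hdvd with h | h
    · exact isOfFinOrder_iff_pow_eq_one.mpr ⟨p - 1, by omega, h⟩
    · exact isOfFinOrder_iff_pow_eq_one.mpr ⟨p + 1, by omega, h⟩
  have hord : m = orderOf u := by
    have h1 : orderOf u ∣ m := orderOf_dvd_of_pow_eq_one hum
    have h2' : m ≤ orderOf u := hlb ⟨hfin.orderOf_pos, (hmem _).mpr (pow_orderOf_eq_one u)⟩
    exact le_antisymm h2' (Nat.le_of_dvd hmpos h1)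
  have hmain : m ∣ p - 1 ∨ m ∣ p + 1 := by
    rcases hdvd with h | h
    · exact Or.inl (hord ▸ orderOf_dvd_of_pow_eq_one h)
    · exact Or.inr (hord ▸ orderOf_dvd_of_pow_eq_one h)
  refine ⟨hmain, ?_⟩
  rcases hmain with h | h
  · exact Nat.Coprime.coprime_dvd_left h
      (Nat.coprime_comm.mp (Nat.coprime_of_lt_prime (by omega) (by omega) hp))
  · refine Nat.Coprime.coprime_dvd_left h ?_
    rw [add_comm]
    exact Nat.coprime_add_self_left.mpr (Nat.coprime_one_left p)
end

section
/- For every positive integer n, the real polynomial T_n(x) - 1 factors as the product over all divisors d of n of Ω_d(x)^{σ_d}, where Ω_1(x) = x - 1, Ω_d(x) = ∏_{1 ≤ k ≤ d/2, gcd(k,d)=1} 2(x - cos(2kπ/d)) for d ≥ 2, and σ_d = 1 for d ∈ {1,2}, σ_d = 2 for d > 2. -/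
/-!
Put `x = cos θ`, `z = e^{iθ}` and `ζ = e^{2πi/n}`. Then
`2 (x - cos (2πj/n)) = z⁻¹ (z - ζ^j) (z - ζ^{-j})`, so `z ^ n - 1 = ∏ (z - ζ ^ j)` gives
`∏_{j < n} 2 (x - cos (2πj/n)) = z^{-n} (z^n - 1)² = 2 (T_n(x) - 1)`. Grouping the fractions
`j/n` by their reduced denominator `d ∣ n` splits this product into the products `Ψ_d` over the
primitive `d`-th roots of unity. Since `cos (2π(d-k)/d) = cos (2πk/d)`, each factor of `Ψ_d` with
`d ≥ 3` occurs twice, so `Ψ_d = Ω_d²`, while `Ψ_1 = 2 Ω_1` and `Ψ_2 = Ω_2`.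
-/

open Polynomial Polynomial.Chebyshev

noncomputable def Omega (d : ℕ) : Polynomial ℝ :=
  if d = 1 then Polynomial.X - 1
  else ∏ k ∈ (Finset.range (d + 1)).filter (fun k => 1 ≤ k ∧ 2 * k ≤ d ∧ Nat.gcd k d = 1),
    (Polynomial.C 2 * (Polynomial.X - Polynomial.C (Real.cos (2 * k * Real.pi / d))))

open Finset Real

theorem prod_range_div_eq_prod_divisors_prod_coprime {M K : Type*} [CommMonoid M] [Field K]
    [CharZero K] {n : ℕ} (hn : n ≠ 0) (g : K → M) :
    ∏ j ∈ range n, g (j / n) =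
      ∏ d ∈ n.divisors, ∏ k ∈ (range d).filter (·.Coprime d), g (k / d) := by
  have gcd_pos (j : ℕ) : 0 < j.gcd n := Nat.gcd_pos_of_pos_right j (Nat.pos_of_ne_zero hn)
  rw [prod_sigma']
  symm
  refine prod_nbij' (fun x => x.2 * (n / x.1)) (fun j => ⟨n / j.gcd n, j / j.gcd n⟩)
    ?_ ?_ ?_ ?_ ?_
  · rintro ⟨d, k⟩ hx
    simp only [mem_sigma, Nat.mem_divisors, mem_filter, mem_range] at hx ⊢
    obtain ⟨⟨⟨m, rfl⟩, hn⟩, hkd, -⟩ := hx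
    rw [Nat.mul_div_cancel_left m (Nat.pos_of_ne_zero (left_ne_zero_of_mul hn))]
    exact Nat.mul_lt_mul_of_pos_right hkd (Nat.pos_of_ne_zero (right_ne_zero_of_mul hn))
  · intro j hj
    simp only [mem_sigma, Nat.mem_divisors, mem_filter, mem_range] at hj ⊢
    exact ⟨⟨Nat.div_dvd_of_dvd (Nat.gcd_dvd_right j n), hn⟩,
      Nat.div_lt_div_of_lt_of_dvd (Nat.gcd_dvd_right j n) hj,
      Nat.coprime_div_gcd_div_gcd (gcd_pos j)⟩
  · rintro ⟨d, k⟩ hx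
    simp only [mem_sigma, Nat.mem_divisors, mem_filter, mem_range] at hx
    obtain ⟨⟨⟨m, rfl⟩, hn⟩, -, hkd⟩ := hx
    have hd : 0 < d := Nat.pos_of_ne_zero (left_ne_zero_of_mul hn)
    have hm : 0 < m := Nat.pos_of_ne_zero (right_ne_zero_of_mul hn)
    simp only [Nat.mul_div_cancel_left m hd, Nat.gcd_mul_right, hkd.gcd_eq_one, one_mul,
      Nat.mul_div_cancel _ hm]
  · intro j _
    simp only [Nat.div_div_self (Nat.gcd_dvd_right j n) hn,
      Nat.div_mul_cancel (Nat.gcd_dvd_left j n)]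
  · rintro ⟨d, k⟩ hx
    simp only [mem_sigma, Nat.mem_divisors] at hx
    obtain ⟨⟨⟨m, rfl⟩, hn⟩, -⟩ := hx
    have hm : (m : K) ≠ 0 := by exact_mod_cast right_ne_zero_of_mul hn
    rw [Nat.mul_div_cancel_left m (Nat.pos_of_ne_zero (left_ne_zero_of_mul hn))]
    push_cast
    rw [mul_div_mul_right _ _ hm]

theorem IsPrimitiveRoot.prod_sub_pow {R : Type*} [CommRing R] [IsDomain R] {ζ : R} {n : ℕ}
    (hζ : IsPrimitiveRoot ζ n) (hn : 0 < n) (z : R) :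
    ∏ j ∈ range n, (z - ζ ^ j) = z ^ n - 1 := by
  simpa [eval_prod] using congrArg (eval z) (X_pow_sub_C_eq_prod hζ hn (one_pow n)).symm

theorem IsPrimitiveRoot.prod_add_inv_sub_pow_add_inv {K : Type*} [Field K] {ζ : K} {n : ℕ}
    (hζ : IsPrimitiveRoot ζ n) (hn : 0 < n) {z : K} (hz : z ≠ 0) :
    ∏ j ∈ range n, (z + z⁻¹ - (ζ ^ j + (ζ ^ j)⁻¹)) = z ^ n + (z ^ n)⁻¹ - 2 := by
  have factor (j : ℕ) :
      z + z⁻¹ - (ζ ^ j + (ζ ^ j)⁻¹) = z⁻¹ * ((z - ζ ^ j) * (z - ζ⁻¹ ^ j)) := by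
    have : ζ ^ j ≠ 0 := pow_ne_zero j (hζ.ne_zero hn.ne')
    rw [inv_pow]
    field_simp
    ring
  have hzn : z ^ n ≠ 0 := pow_ne_zero n hz
  rw [prod_congr rfl fun j _ => factor j, prod_mul_distrib, prod_mul_distrib, prod_const,
    card_range, hζ.prod_sub_pow hn, hζ.inv.prod_sub_pow hn, inv_pow]
  field_simp
  ring

theorem prod_two_mul_cos_sub_cos {n : ℕ} (hn : 0 < n) (θ : ℝ) :
    ∏ j ∈ range n, 2 * (cos θ - cos (2 * j * π / n)) = 2 * (cos (n * θ) - 1) := by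
  have two_cos (x : ℝ) : ((2 * cos x : ℝ) : ℂ) =
      Complex.exp (x * Complex.I) + (Complex.exp (x * Complex.I))⁻¹ := by
    rw [Complex.ofReal_mul, Complex.ofReal_cos, Complex.ofReal_ofNat, Complex.two_cos, neg_mul,
      Complex.exp_neg]
  set ζ := Complex.exp (2 * π * Complex.I / n)
  have hζ : IsPrimitiveRoot ζ n := Complex.isPrimitiveRoot_exp n hn.ne'
  have root_pow (j : ℕ) : Complex.exp (↑(2 * j * π / n) * Complex.I) = ζ ^ j := by
    rw [← Complex.exp_nat_mul]
    push_cast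
    ring_nf
  have exp_pow : Complex.exp (↑(n * θ) * Complex.I) = Complex.exp (θ * Complex.I) ^ n := by
    rw [← Complex.exp_nat_mul]
    push_cast
    ring_nf
  simp only [mul_sub, mul_one]
  apply Complex.ofReal_injective
  simp only [Complex.ofReal_prod, Complex.ofReal_sub, Complex.ofReal_ofNat, two_cos, root_pow,
    exp_pow]
  rw [hζ.prod_add_inv_sub_pow_add_inv hn (Complex.exp_ne_zero _)]

theorem C_two_mul_T_sub_one_eq_prod {n : ℕ} (hn : 0 < n) :
    C 2 * (T ℝ n - 1) = ∏ j ∈ range n, C 2 * (X - C (cos (2 * j * π / n))) := by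
  refine eq_of_infinite_eval_eq _ _ ((Set.Icc_infinite (by norm_num : (-1 : ℝ) < 1)).mono ?_)
  rintro x ⟨hx₁, hx₂⟩
  rw [Set.mem_ofPred_eq, ← cos_arccos hx₁ hx₂]
  simp only [eval_mul, eval_C, eval_sub, eval_one, eval_prod, eval_X, T_real_cos]
  rw [prod_two_mul_cos_sub_cos hn, Int.cast_natCast]

/-- The product of `2 (X - Re ζ)` over the primitive `d`-th roots of unity `ζ = e^{2πik/d}`. -/
noncomputable def Psi (d : ℕ) : ℝ[X] :=
  ∏ k ∈ (range d).filter (·.Coprime d), C 2 * (X - C (cos (2 * k * π / d)))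

theorem prod_divisors_Psi {n : ℕ} (hn : 0 < n) : ∏ d ∈ n.divisors, Psi d = C 2 * (T ℝ n - 1) := by
  have angle (k d : ℕ) : 2 * ((k : ℝ) / d) * π = 2 * k * π / d := by ring
  have grouped := prod_range_div_eq_prod_divisors_prod_coprime (K := ℝ) hn.ne'
    fun x => C 2 * (X - C (cos (2 * x * π)))
  simp only [angle] at grouped
  rw [C_two_mul_T_sub_one_eq_prod hn, grouped]
  rfl

def halfCoprimes (d : ℕ) : Finset ℕ :=
  (range (d + 1)).filter (fun k => 1 ≤ k ∧ 2 * k ≤ d ∧ Nat.gcd k d = 1)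

theorem two_mul_lt_of_mem_halfCoprimes {d k : ℕ} (hd : 3 ≤ d) (hk : k ∈ halfCoprimes d) :
    2 * k < d := by
  obtain ⟨-, hk₁, hk₂, hcop⟩ := mem_filter.1 hk
  refine lt_of_le_of_ne hk₂ fun h => ?_
  rw [← h, two_mul, Nat.gcd_add_self_right, Nat.gcd_self] at hcop
  omega

theorem filter_coprime_eq_halfCoprimes_union {d : ℕ} (hd : 3 ≤ d) :
    (range d).filter (·.Coprime d) = halfCoprimes d ∪ (halfCoprimes d).image (d - ·) := by
  ext k
  simp only [halfCoprimes, mem_union, mem_image, mem_filter, mem_range]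
  constructor
  · rintro ⟨hkd, hcop⟩
    have hk₀ : k ≠ 0 := by
      rintro rfl
      rw [Nat.coprime_zero_left] at hcop
      omega
    by_cases hk : 2 * k ≤ d
    · exact Or.inl ⟨by omega, by omega, hk, hcop⟩
    · exact Or.inr ⟨d - k, ⟨by omega, by omega, by omega,
        (Nat.coprime_self_sub_left hkd.le).2 hcop⟩, by omega⟩
  · rintro (⟨-, hk₁, hk₂, hcop⟩ | ⟨j, ⟨-, hj₁, hj₂, hcop⟩, rfl⟩)
    · exact ⟨by omega, hcop⟩
    · exact ⟨by omega, (Nat.coprime_self_sub_left (by omega)).2 hcop⟩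

theorem disjoint_halfCoprimes_image {d : ℕ} (hd : 3 ≤ d) :
    Disjoint (halfCoprimes d) ((halfCoprimes d).image (d - ·)) := by
  refine disjoint_left.2 fun k hk hk' => ?_
  obtain ⟨j, hj, rfl⟩ := mem_image.1 hk'
  have := two_mul_lt_of_mem_halfCoprimes hd hk
  have := two_mul_lt_of_mem_halfCoprimes hd hj
  omega

theorem Psi_one : Psi 1 = C 2 * Omega 1 := by
  simp [Psi, Omega]

theorem Psi_two : Psi 2 = Omega 2 := rfl

theorem Psi_eq_Omega_sq {d : ℕ} (hd : 3 ≤ d) : Psi d = Omega d ^ 2 := by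
  have inj : Set.InjOn (d - ·) (halfCoprimes d) := fun a ha b hb h => by
    have := two_mul_lt_of_mem_halfCoprimes hd ha
    have := two_mul_lt_of_mem_halfCoprimes hd hb
    simp only at h
    omega
  have reflect : ∀ k ∈ halfCoprimes d,
      C 2 * (X - C (cos (2 * ↑(d - k) * π / d))) = C 2 * (X - C (cos (2 * k * π / d))) := by
    intro k hk
    have hd0 : (d : ℝ) ≠ 0 := by positivity
    rw [Nat.cast_sub (by linarith [two_mul_lt_of_mem_halfCoprimes hd hk]),
      show 2 * ((d : ℝ) - k) * π / d = 2 * π - 2 * k * π / d by field_simp, cos_two_pi_sub]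
  rw [Psi, Omega, if_neg (by omega), ← halfCoprimes, filter_coprime_eq_halfCoprimes_union hd,
    prod_union (disjoint_halfCoprimes_image hd), prod_image inj, prod_congr rfl reflect, sq]

theorem chebyshev_sub_one_factorization (n : ℕ) (hn : 0 < n) :
    T ℝ n - 1 = ∏ d ∈ n.divisors, Omega d ^ (if d ≤ 2 then 1 else 2) := by
  have Psi_eq {d : ℕ} (hd : d ∈ n.divisors.erase 1) :
      Psi d = Omega d ^ (if d ≤ 2 then 1 else 2) := by
    have hd₀ := Nat.pos_of_mem_divisors (mem_of_mem_erase hd)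
    obtain rfl | hd₃ : d = 2 ∨ 3 ≤ d := by have := ne_of_mem_erase hd; omega
    · rw [Psi_two, if_pos le_rfl, pow_one]
    · rw [Psi_eq_Omega_sq hd₃, if_neg (by omega)]
  have h₁ : 1 ∈ n.divisors := Nat.one_mem_divisors.2 hn.ne'
  refine mul_left_cancel₀ (C_ne_zero.2 two_ne_zero : (C 2 : ℝ[X]) ≠ 0) ?_
  rw [← prod_divisors_Psi hn, ← mul_prod_erase _ _ h₁, ← mul_prod_erase _ _ h₁, Psi_one,
    prod_congr rfl fun d hd => Psi_eq hd, if_pos (by norm_num), pow_one, mul_assoc]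
end

section
/- For all positive integers m and n, the polynomial Ω_{mn}(x) divides Ω_n(T_m(x)) in ℝ[x]. -/
open Polynomial Polynomial.Chebyshev

/-!
The roots of `Omega d` are the numbers `cos (2kπ/d)` with `1 ≤ k ≤ d/2` and `k` coprime to `d`;
they are simple, since `cos` is injective on `[0, π]`. For such a `k` with `d = mn`, the
identity `T_m (cos θ) = cos (mθ)` sends `cos (2kπ/(mn))` to `cos (2kπ/n)`, and `k` is coprime
to `n`, so, after reducing `k` modulo `n` and reflecting it into `[1, n/2]`, this is a root of
`Omega n`. Hence every root of `Omega (mn)` is a root of `Omega n ∘ T_m`.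
-/

open Real

lemma cos_two_mul_nat_mul_pi_div_mod (k n : ℕ) :
    cos (2 * k * π / n) = cos (2 * (k % n : ℕ) * π / n) := by
  rcases Nat.eq_zero_or_pos n with rfl | hn
  · simp
  have hk : (k : ℝ) = (k % n : ℕ) + n * (k / n : ℕ) := by
    exact_mod_cast (Nat.mod_add_div k n).symm
  have harg :
      2 * (k : ℝ) * π / n = 2 * (k % n : ℕ) * π / n + ((k / n : ℕ) : ℤ) * (2 * π) := by
    rw [hk, Int.cast_natCast]
    field_simp
  rw [harg, cos_add_int_mul_two_pi]

lemma cos_two_mul_nat_sub_mul_pi_div {r n : ℕ} (h : r ≤ n) :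
    cos (2 * (n - r : ℕ) * π / n) = cos (2 * r * π / n) := by
  rcases Nat.eq_zero_or_pos n with rfl | hn
  · simp
  have harg : 2 * ((n - r : ℕ) : ℝ) * π / n = 2 * π - 2 * r * π / n := by
    push_cast [h]
    field_simp
  rw [harg, cos_two_pi_sub]

lemma exists_cos_two_mul_pi_div_eq_of_coprime {n k : ℕ} (hn : 2 ≤ n) (hk : k.Coprime n) :
    ∃ j, 1 ≤ j ∧ 2 * j ≤ n ∧ j.Coprime n ∧
      cos (2 * j * π / n) = cos (2 * k * π / n) := by
  set r := k % n with hr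
  have hrn : r < n := Nat.mod_lt _ (by omega)
  have hrg : r.Coprime n := by rwa [hr, Nat.Coprime, ← Nat.gcd_rec, Nat.gcd_comm]
  have hr0 : r ≠ 0 := by
    rintro h
    rw [h, Nat.coprime_zero_left] at hrg
    omega
  rw [cos_two_mul_nat_mul_pi_div_mod k n]
  rcases le_or_gt (2 * r) n with hle | hlt
  · exact ⟨r, by omega, hle, hrg, rfl⟩
  · exact ⟨n - r, by omega, by omega, (Nat.coprime_self_sub_left hrn.le).mpr hrg,
      cos_two_mul_nat_sub_mul_pi_div hrn.le⟩

lemma omega_eval_cos_eq_zero {n k : ℕ} (hn : n ≠ 0) (hk : k.Coprime n) :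
    (Omega n).eval (cos (2 * k * π / n)) = 0 := by
  rcases eq_or_ne n 1 with rfl | hn1
  · have harg : 2 * (k : ℝ) * π / (1 : ℕ) = k * (2 * π) := by push_cast; ring
    rw [harg, cos_nat_mul_two_pi]
    simp [Omega]
  obtain ⟨j, hj1, hj2, hjn, hcos⟩ := exists_cos_two_mul_pi_div_eq_of_coprime (by omega) hk
  rw [Omega, if_neg hn1, eval_prod]
  refine Finset.prod_eq_zero (i := j) ?_ (by simp [hcos])
  simp only [Finset.mem_filter, Finset.mem_range]
  exact ⟨by omega, hj1, hj2, hjn⟩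

lemma injOn_cos_two_mul_nat_mul_pi_div {d : ℕ} (hd : d ≠ 0) :
    Set.InjOn (fun k : ℕ => cos (2 * k * π / d)) {k | 2 * k ≤ d} := by
  have hd' : (0 : ℝ) < d := by positivity
  have hmaps : Set.MapsTo (fun k : ℕ => 2 * k * π / d) {k | 2 * k ≤ d} (Set.Icc 0 π) := by
    intro k hk
    have hk' : (2 * k : ℝ) ≤ d := by exact_mod_cast hk
    refine ⟨by positivity, ?_⟩
    rw [div_le_iff₀ hd']
    nlinarith [pi_pos]
  refine injOn_cos.comp (fun a _ b _ hab => ?_) hmaps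
  field_simp at hab
  exact_mod_cast hab

lemma chebyshev_T_eval_cos_two_mul_pi_div {m : ℕ} (hm : m ≠ 0) (n k : ℕ) :
    (T ℝ m).eval (cos (2 * k * π / (m * n : ℕ))) = cos (2 * k * π / n) := by
  rw [T_real_cos]
  congr 1
  push_cast
  rw [← mul_div_assoc, mul_div_mul_left _ _ (by exact_mod_cast hm)]

lemma isCoprime_C_mul_X_sub_C {K : Type*} [Field K] {c a b : K} (hc : c ≠ 0) (hab : a ≠ b) :
    IsCoprime (C c * (X - C a)) (C c * (X - C b)) := by
  have hcu : IsUnit (C c) := isUnit_C.mpr hc.isUnit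
  rw [isCoprime_mul_unit_left_left hcu, isCoprime_mul_unit_left_right hcu]
  exact isCoprime_X_sub_C_of_isUnit_sub (sub_ne_zero.mpr hab).isUnit

theorem omega_mul_dvd_omega_comp_general (m n : ℕ) :
    Omega (m * n) ∣ (Omega n).comp (T ℝ m) := by
  rcases eq_or_ne (m * n) 1 with h1 | h1
  · obtain ⟨rfl, rfl⟩ := mul_eq_one.mp h1
    simp
  rw [Omega, if_neg h1]
  apply Finset.prod_dvd_of_coprime
  · intro a ha b hb hab
    simp only [Finset.coe_filter, Finset.mem_range, Set.mem_ofPred_eq] at ha hb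
    exact isCoprime_C_mul_X_sub_C two_ne_zero
      fun h => hab (injOn_cos_two_mul_nat_mul_pi_div (by omega) ha.2.2.1 hb.2.2.1 h)
  · intro k hk
    simp only [Finset.mem_filter, Finset.mem_range] at hk
    obtain ⟨-, hk1, hk2, hkmn⟩ := hk
    obtain ⟨hm, hn⟩ := mul_ne_zero_iff.mp (show m * n ≠ 0 by omega)
    have hkn : k.Coprime n := Nat.Coprime.coprime_dvd_right (dvd_mul_left n m) hkmn
    rw [(isUnit_C.mpr two_ne_zero.isUnit).mul_left_dvd, dvd_iff_isRoot, IsRoot, eval_comp,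
      chebyshev_T_eval_cos_two_mul_pi_div hm, omega_eval_cos_eq_zero hn hkn]

theorem omega_mul_dvd_omega_comp (m n : ℕ) (hm : 0 < m) (hn : 0 < n) :
    Omega (m * n) ∣ (Omega n).comp (T ℝ m) :=
  omega_mul_dvd_omega_comp_general m n
end

section
/- Let m, n be positive integers with n ≥ 3 such that every prime divisor of m also divides n. Then Ω_{mn}(x) = Ω_n(T_m(x)) as polynomials over ℝ. -/
open Polynomial Polynomial.Chebyshev

open Finset Real
open scoped Nat

/-!
Since every prime factor of `m` divides `n`, `φ (m * n) = m * φ n`, so both sides have degree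
`φ (m n) / 2` and leading coefficient `2 ^ (φ (m n) / 2)`. The roots `cos (2 k π / (m n))` of
`Ω_{mn}`, `k` coprime to `m n` and `2 k ≤ m n`, are distinct (`cos` is injective on `[0, π]`),
and each is a root of `Ω_n ∘ T_m` because `T_m (cos θ) = cos (m θ)` and `k` is coprime to `n`.
A polynomial is determined by its leading coefficient and as many distinct roots as its degree.
-/

theorem Nat.totient_mul_of_forall_prime_dvd {m n : ℕ}
    (h : ∀ p : ℕ, p.Prime → p ∣ m → p ∣ n) :
    φ (m * n) = m * φ n := by
  rcases eq_or_ne m 0 with rfl | hm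
  · simp
  rcases eq_or_ne n 0 with rfl | hn
  · simp
  have hfactors : (m * n).primeFactors = n.primeFactors := by
    rw [Nat.primeFactors_mul hm hn, union_eq_right]
    intro p hp
    have hp' := Nat.mem_primeFactors.mp hp
    exact Nat.mem_primeFactors.mpr ⟨hp'.1, h p hp'.1 hp'.2.1, hn⟩
  have hpos : 0 < ∏ p ∈ n.primeFactors, p := prod_pos fun p hp => Nat.pos_of_mem_primeFactors hp
  refine Nat.eq_of_mul_eq_mul_right hpos ?_
  have hmn := Nat.totient_mul_prod_primeFactors (m * n)
  rw [hfactors] at hmn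
  rw [hmn, mul_assoc, mul_assoc, Nat.totient_mul_prod_primeFactors]

theorem Polynomial.eq_C_leadingCoeff_mul_prod_X_sub_C {R ι : Type*} [CommRing R] [IsDomain R]
    {p : R[X]} {s : Finset ι} {f : ι → R} (hf : Set.InjOn f s)
    (hroot : ∀ i ∈ s, p.IsRoot (f i)) (hdeg : p.natDegree ≤ #s) :
    p = C p.leadingCoeff * ∏ i ∈ s, (X - C (f i)) := by
  rcases eq_or_ne p 0 with rfl | hp
  · simp
  have hle : s.val.map f ≤ p.roots := by
    rw [Multiset.le_iff_subset (s.nodup.map_on hf)]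
    intro a ha
    obtain ⟨i, hi, rfl⟩ := Multiset.mem_map.mp ha
    exact (mem_roots hp).mpr (hroot i hi)
  have hroots : s.val.map f = p.roots :=
    Multiset.eq_of_le_of_card_le hle (by simpa using (card_roots' p).trans hdeg)
  have hcard : Multiset.card p.roots = p.natDegree :=
    le_antisymm (card_roots' p) (by simpa [← hroots] using hdeg)
  conv_lhs => rw [← C_leadingCoeff_mul_prod_multiset_X_sub_C hcard, ← hroots]
  rw [Multiset.map_map, prod_eq_multiset_prod]
  rfl

namespace Omega

def index (d : ℕ) : Finset ℕ :=
  (range (d + 1)).filter (fun k => 1 ≤ k ∧ 2 * k ≤ d ∧ Nat.gcd k d = 1)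

noncomputable def root (d k : ℕ) : ℝ := cos (2 * k * π / d)

lemma mem_index {d k : ℕ} : k ∈ index d ↔ 1 ≤ k ∧ 2 * k ≤ d ∧ k.Coprime d := by
  simp only [index, mem_filter, mem_range, Nat.Coprime]
  omega

lemma eq_C_mul_prod {d : ℕ} (hd : d ≠ 1) :
    Omega d = C (2 ^ #(index d)) * ∏ k ∈ index d, (X - C (root d k)) := by
  rw [Omega, if_neg hd, prod_mul_distrib, prod_const, C_pow]
  rfl

lemma isRoot_root {d k : ℕ} (hk : k ∈ index d) : (Omega d).IsRoot (root d k) := by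
  have hd : d ≠ 1 := by have := mem_index.mp hk; omega
  rw [IsRoot, eq_C_mul_prod hd, eval_mul, eval_prod]
  exact mul_eq_zero_of_right _ (prod_eq_zero hk (by simp))

lemma natDegree_eq {d : ℕ} (hd : d ≠ 1) : (Omega d).natDegree = #(index d) := by
  rw [eq_C_mul_prod hd, natDegree_C_mul (by positivity),
    natDegree_prod_of_monic _ _ fun k _ => monic_X_sub_C _]
  simp

lemma leadingCoeff_eq {d : ℕ} (hd : d ≠ 1) : (Omega d).leadingCoeff = 2 ^ #(index d) := by
  rw [eq_C_mul_prod hd, leadingCoeff_mul, leadingCoeff_C,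
    (monic_prod_of_monic _ _ fun k _ => monic_X_sub_C _).leadingCoeff, mul_one]

lemma two_mul_ne_of_mem_index {d k : ℕ} (hd : 2 < d) (hk : k ∈ index d) : 2 * k ≠ d := by
  rintro rfl
  have := (mem_index.mp hk).2.2
  rw [Nat.Coprime, Nat.gcd_mul_left_right] at this
  omega

lemma filter_coprime_two_mul_le {d : ℕ} (hd : d ≠ 1) :
    {k ∈ range d | d.Coprime k ∧ 2 * k ≤ d} = index d := by
  ext k
  simp only [mem_filter, mem_range, mem_index]
  constructor
  · rintro ⟨hkd, hcop, hk⟩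
    have : k ≠ 0 := by rintro rfl; exact hd (Nat.coprime_zero_right d |>.mp hcop)
    exact ⟨by omega, hk, hcop.symm⟩
  · rintro ⟨hk1, hk, hcop⟩
    exact ⟨by omega, hcop.symm, hk⟩

lemma card_filter_coprime_not_two_mul_le {d : ℕ} (hd : 2 < d) :
    #{k ∈ range d | d.Coprime k ∧ ¬2 * k ≤ d} = #(index d) := by
  refine card_nbij' (d - ·) (d - ·) ?_ ?_ ?_ ?_
  · intro k hk
    simp only [mem_coe, mem_filter, mem_range] at hk
    show d - k ∈ index d
    exact mem_index.mpr
      ⟨by omega, by omega, (Nat.coprime_self_sub_left (by omega)).mpr hk.2.1.symm⟩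
  · intro k hk
    have hne := two_mul_ne_of_mem_index hd hk
    obtain ⟨hk1, hkd, hcop⟩ := mem_index.mp hk
    show d - k ∈ {k ∈ range d | d.Coprime k ∧ ¬2 * k ≤ d}
    simp only [mem_filter, mem_range]
    exact ⟨by omega, ((Nat.coprime_self_sub_left (by omega)).mpr hcop).symm, by omega⟩
  · intro k hk
    simp only [mem_coe, mem_filter, mem_range] at hk
    dsimp only
    omega
  · intro k hk
    have := mem_index.mp hk
    dsimp only
    omega

lemma two_mul_card_index {d : ℕ} (hd : 2 < d) : 2 * #(index d) = φ d := by
  rw [Nat.totient, ← card_filter_add_card_filter_not (s := {k ∈ range d | d.Coprime k})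
    (p := fun k => 2 * k ≤ d), filter_filter, filter_filter,
    filter_coprime_two_mul_le (by omega), card_filter_coprime_not_two_mul_le hd]
  ring

lemma angle_mem_Icc {d k : ℕ} (hk : k ∈ index d) : 2 * k * π / d ∈ Set.Icc 0 π := by
  obtain ⟨hk1, hkd, -⟩ := mem_index.mp hk
  have hd : (0 : ℝ) < d := by exact_mod_cast (show 0 < d by omega)
  have hkd' : 2 * (k : ℝ) ≤ d := by exact_mod_cast hkd
  refine ⟨by positivity, (div_le_iff₀ hd).mpr ?_⟩
  nlinarith [pi_pos]

lemma root_injOn (d : ℕ) : Set.InjOn (root d) (index d) := by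
  intro k hk k' hk' h
  have hd : (d : ℝ) ≠ 0 := by
    have := mem_index.mp hk; exact_mod_cast (show d ≠ 0 by omega)
  have := injOn_cos (angle_mem_Icc hk) (angle_mem_Icc hk') h
  field_simp at this
  exact_mod_cast this

lemma cos_two_mul_mod_mul_pi_div (k n : ℕ) :
    cos (2 * (k % n : ℕ) * π / n) = cos (2 * k * π / n) := by
  rcases eq_or_ne n 0 with rfl | hn
  · simp
  have hk : 2 * (k : ℝ) * π / n = 2 * (k % n : ℕ) * π / n + (k / n : ℕ) * (2 * π) := by
    have hk' : (k : ℝ) = (k % n : ℕ) + n * (k / n : ℕ) := by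
      exact_mod_cast (Nat.mod_add_div k n).symm
    rw [hk']
    field_simp
  rw [hk, cos_add_nat_mul_two_pi]

lemma cos_two_mul_sub_mul_pi_div {k n : ℕ} (hk : k ≤ n) :
    cos (2 * (n - k : ℕ) * π / n) = cos (2 * k * π / n) := by
  rcases eq_or_ne n 0 with rfl | hn
  · simp
  rw [Nat.cast_sub hk, ← cos_two_pi_sub]
  congr 1
  field_simp
  ring

lemma isRoot_cos {n k : ℕ} (hn : 1 < n) (hk : k.Coprime n) :
    (Omega n).IsRoot (cos (2 * k * π / n)) := by
  set s := k % n
  have hsn : s < n := Nat.mod_lt k (by omega)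
  have hs : s.Coprime n := by rwa [Nat.Coprime, ← Nat.gcd_rec, Nat.gcd_comm]
  have hs1 : 1 ≤ s := by
    by_contra h0
    rw [show s = 0 by omega, Nat.coprime_zero_left] at hs
    omega
  rw [← cos_two_mul_mod_mul_pi_div]
  by_cases hsmall : 2 * s ≤ n
  · exact isRoot_root (mem_index.mpr ⟨hs1, hsmall, hs⟩)
  · rw [← cos_two_mul_sub_mul_pi_div hsn.le]
    exact isRoot_root
      (mem_index.mpr ⟨by omega, by omega, (Nat.coprime_self_sub_left hsn.le).mpr hs⟩)

lemma isRoot_comp_T {m n k : ℕ} (hn : 1 < n) (hk : k ∈ index (m * n)) :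
    ((Omega n).comp (T ℝ m)).IsRoot (root (m * n) k) := by
  obtain ⟨hk1, hkmn, hcop⟩ := mem_index.mp hk
  have hm : (m : ℝ) ≠ 0 := by
    rintro hm
    rw [Nat.cast_eq_zero.mp hm] at hkmn
    omega
  have hangle : (m : ℤ) * (2 * k * π / (m * n : ℕ)) = 2 * k * π / n := by
    push_cast
    field_simp
  rw [IsRoot, eval_comp, root, T_real_cos, hangle]
  exact isRoot_cos hn (Nat.Coprime.coprime_mul_left_right hcop)

end Omega

theorem omega_mul_eq_omega_comp (m n : ℕ) (hm : 0 < m) (hn : 3 ≤ n)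
    (h : ∀ p : ℕ, p.Prime → p ∣ m → p ∣ n) :
    Omega (m * n) = (Omega n).comp (T ℝ m) := by
  have hmn : 3 ≤ m * n := hn.trans (Nat.le_mul_of_pos_left n hm)
  set N := #(Omega.index (m * n))
  have hN : N = m * #(Omega.index n) := by
    have h2N := Omega.two_mul_card_index (d := m * n) (by omega)
    rw [Nat.totient_mul_of_forall_prime_dvd h, ← Omega.two_mul_card_index (by omega)] at h2N
    linarith
  set P := (Omega n).comp (T ℝ m)
  have hdeg : P.natDegree = N := by
    rw [natDegree_comp, Omega.natDegree_eq (by omega), natDegree_T, hN]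
    simp [mul_comm]
  have hlc : P.leadingCoeff = 2 ^ N := by
    rw [leadingCoeff_comp (by simp; omega), Omega.leadingCoeff_eq (by omega),
      Omega.natDegree_eq (by omega), leadingCoeff_T, Int.natAbs_natCast, ← pow_mul, ← pow_add,
      hN, Nat.sub_one_mul]
    have := Nat.le_mul_of_pos_left #(Omega.index n) hm
    congr 1
    omega
  rw [Omega.eq_C_mul_prod (by omega),
    eq_C_leadingCoeff_mul_prod_X_sub_C (p := P) (Omega.root_injOn _)
    (fun k hk => Omega.isRoot_comp_T (by omega) hk) hdeg.le, hlc]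
end

section
/- For every odd positive integer n, Ω_n(0) = 1 or Ω_n(0) = -1, where Ω_1(x) = x - 1 and for d ≥ 2, Ω_d(x) = ∏_{1 ≤ k ≤ d/2, gcd(k,d)=1} 2(x - cos(2kπ/d)). -/
open Polynomial Polynomial.Chebyshev

/-! Squaring `Ω_n(0) = ∏ (-2 cos (2kπ/n))` and pairing `k` with `n - k` turns it into
`∏ (z + z⁻¹)` over the primitive `n`-th roots of unity `z`. Since
`(z + z⁻¹)(z - z⁻¹) = z² - z⁻²` and, for odd `n`, `z ↦ z²` permutes the primitive roots,
this product is `1`. -/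

open Finset

theorem IsPrimitiveRoot.sq_ne_one_of_odd {M : Type*} [CommMonoid M] {z : M} {n : ℕ}
    (hz : IsPrimitiveRoot z n) (hn : Odd n) (h1 : n ≠ 1) : z ^ 2 ≠ 1 := by
  intro h
  have : n ≤ 2 := Nat.le_of_dvd two_pos (hz.dvd_of_pow_eq_one 2 h)
  interval_cases n
  · exact absurd hn (by decide)
  · exact h1 rfl
  · exact absurd hn (by decide)

theorem prod_primitiveRoots_add_inv {K : Type*} [Field K] {n : ℕ} (hn : Odd n) (h1 : n ≠ 1) :
    ∏ z ∈ primitiveRoots n K, (z + z⁻¹) = 1 := by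
  have : NeZero n := ⟨hn.pos.ne'⟩
  set D := ∏ z ∈ primitiveRoots n K, (z - z⁻¹)
  have hD : D ≠ 0 := by
    refine prod_ne_zero_iff.2 fun z hz => sub_ne_zero.2 fun h => ?_
    have hz := isPrimitiveRoot_of_mem_primitiveRoots hz
    exact hz.sq_ne_one_of_odd hn h1 <| by
      rwa [sq, mul_eq_one_iff_eq_inv₀ (hz.ne_zero hn.pos.ne')]
  have hsq : ∏ z ∈ primitiveRoots n K, (z ^ 2 - (z ^ 2)⁻¹) = D := by
    let e := IsPrimitiveRoot.primitiveRootsPowEquivOfCoprime (R := K) (Nat.coprime_two_left.2 hn)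
    calc ∏ z ∈ primitiveRoots n K, (z ^ 2 - (z ^ 2)⁻¹)
        = ∏ z : primitiveRoots n K, ((e z).1 - (e z).1⁻¹) := (prod_coe_sort _ _).symm
      _ = ∏ z : primitiveRoots n K, (z.1 - z.1⁻¹) := e.prod_comp fun z => z.1 - z.1⁻¹
      _ = D := prod_coe_sort _ fun z => z - z⁻¹
  have : (∏ z ∈ primitiveRoots n K, (z + z⁻¹)) * D = D := by
    rw [← prod_mul_distrib, ← hsq]
    exact prod_congr rfl fun z _ => by ring
  exact (mul_eq_right₀ hD).1 this

theorem IsPrimitiveRoot.prod_filter_coprime_pow {R M : Type*} [CommRing R] [IsDomain R]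
    [CommMonoid M] {ζ : R} {n : ℕ} [NeZero n] (hζ : IsPrimitiveRoot ζ n) (f : R → M) :
    ∏ k ∈ (range n).filter (·.Coprime n), f (ζ ^ k) = ∏ z ∈ primitiveRoots n R, f z := by
  refine prod_nbij (ζ ^ ·) (fun k hk => ?_) (fun a ha b hb hab => ?_) (fun z hz => ?_)
    fun _ _ => rfl
  · rw [mem_filter, mem_range] at hk
    exact (mem_primitiveRoots (NeZero.pos n)).2 (hζ.pow_of_coprime k hk.2)
  · rw [mem_coe, mem_filter, mem_range] at ha hb
    exact hζ.pow_inj ha.1 hb.1 hab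
  · obtain ⟨k, hk, hcop, rfl⟩ :=
      hζ.isPrimitiveRoot_iff.1 ((mem_primitiveRoots (NeZero.pos n)).1 hz)
    exact ⟨k, mem_coe.2 (mem_filter.2 ⟨mem_range.2 hk, hcop⟩), rfl⟩

theorem prod_filter_coprime_eq_sq {M : Type*} [CommMonoid M] {n : ℕ} (hn : Odd n) (h1 : n ≠ 1)
    (f : ℕ → M) (hf : ∀ k ≤ n, f (n - k) = f k) :
    ∏ k ∈ (range n).filter (·.Coprime n), f k =
      (∏ k ∈ (range (n + 1)).filter (fun k => 1 ≤ k ∧ 2 * k ≤ n ∧ Nat.gcd k n = 1), f k) ^ 2 := by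
  set S := (range (n + 1)).filter (fun k => 1 ≤ k ∧ 2 * k ≤ n ∧ Nat.gcd k n = 1)
  obtain ⟨m, rfl⟩ := hn
  have hpos : ∀ k, k.Coprime (2 * m + 1) → 1 ≤ k := fun k hk =>
    Nat.pos_of_ne_zero (by rintro rfl; exact h1 (Nat.coprime_zero_left _ |>.1 hk))
  have hlow : ((range (2 * m + 1)).filter (·.Coprime (2 * m + 1))).filter (2 * · < 2 * m + 1)
      = S := by
    ext k
    simp only [S, mem_filter, mem_range, ← Nat.coprime_iff_gcd_eq_one]
    constructor
    · rintro ⟨⟨-, hk⟩, hlt⟩; exact ⟨by omega, hpos k hk, by omega, hk⟩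
    · rintro ⟨-, -, hle, hk⟩; exact ⟨⟨by omega, hk⟩, by omega⟩
  have hhigh : ∏ k ∈ ((range (2 * m + 1)).filter (·.Coprime (2 * m + 1))).filter
      (¬ 2 * · < 2 * m + 1), f k = ∏ k ∈ S, f k := by
    refine prod_nbij' (2 * m + 1 - ·) (2 * m + 1 - ·) (fun k hk => ?_) (fun k hk => ?_)
      (fun k hk => ?_) (fun k hk => ?_) (fun k hk => ?_)
    all_goals
      simp only [S, mem_filter, mem_range, ← Nat.coprime_iff_gcd_eq_one] at hk ⊢
    · exact ⟨by omega, by omega, by omega, (Nat.coprime_self_sub_left (by omega)).2 hk.1.2⟩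
    · exact ⟨⟨by omega, (Nat.coprime_self_sub_left (by omega)).2 hk.2.2.2⟩, by omega⟩
    · omega
    · omega
    · exact (hf k (by omega)).symm
  rw [← prod_filter_mul_prod_filter_not _ (2 * · < 2 * m + 1), hlow, hhigh, sq]

open Real in
theorem two_mul_cos_eq_pow_add_inv (n k : ℕ) :
    ((2 * cos (2 * k * π / n) : ℝ) : ℂ) =
      Complex.exp (2 * π * Complex.I / n) ^ k + (Complex.exp (2 * π * Complex.I / n) ^ k)⁻¹ := by
  rw [← Complex.exp_nat_mul, ← Complex.exp_neg]
  push_cast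
  rw [Complex.two_cos]
  ring_nf

theorem Omega_eval_zero {n : ℕ} (h1 : n ≠ 1) :
    (Omega n).eval 0 = ∏ k ∈ (range (n + 1)).filter (fun k => 1 ≤ k ∧ 2 * k ≤ n ∧ Nat.gcd k n = 1),
      -(2 * Real.cos (2 * k * Real.pi / n)) := by
  simp [Omega, h1, eval_prod]

theorem omega_eval_zero_of_odd_general (n : ℕ) (hodd : Odd n) :
    (Omega n).eval 0 = 1 ∨ (Omega n).eval 0 = -1 := by
  rcases eq_or_ne n 1 with rfl | h1
  · simp [Omega]
  have : NeZero n := ⟨hodd.pos.ne'⟩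
  set c : ℕ → ℝ := fun k => 2 * Real.cos (2 * k * Real.pi / n)
  have hc : ∀ k ≤ n, c (n - k) = c k := fun k hk => by
    have : 2 * ((n - k : ℕ) : ℝ) * Real.pi / n = 2 * Real.pi - 2 * k * Real.pi / n := by
      rw [Nat.cast_sub hk]
      field_simp [NeZero.ne (n : ℝ)]
    simp only [c, this, Real.cos_two_pi_sub]
  rw [← sq_eq_one_iff, Omega_eval_zero h1, ← prod_pow]
  simp only [neg_sq]
  rw [prod_pow, ← prod_filter_coprime_eq_sq hodd h1 c hc]
  apply Complex.ofReal_injective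
  rw [Complex.ofReal_prod, Complex.ofReal_one]
  simp only [c, two_mul_cos_eq_pow_add_inv]
  rw [(Complex.isPrimitiveRoot_exp n (NeZero.ne n)).prod_filter_coprime_pow (fun z => z + z⁻¹),
    prod_primitiveRoots_add_inv hodd h1]

theorem omega_eval_zero_of_odd (n : ℕ) (hn : 0 < n) (hodd : Odd n) :
    (Omega n).eval 0 = 1 ∨ (Omega n).eval 0 = -1 :=
  omega_eval_zero_of_odd_general n hodd
end

section
/- Let K be a field of characteristic 0 containing ℤ (i.e., with the canonical ring map from ℤ[x] to K[x]). If P ∈ K[x] satisfies P(0) = 1 and P^2 has all coefficients in the image of ℤ, then all coefficients of P are in the image of ℤ. -/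
open Polynomial

/-- If a polynomial over `ℚ` has a square with integer coefficients, it has
integer coefficients. -/
lemma rat_sq_int_coeffs (p : ℚ[X]) (hr : ∀ n : ℕ, ∃ z : ℤ, (p ^ 2).coeff n = (z : ℚ)) :
    ∀ n : ℕ, ∃ z : ℤ, p.coeff n = (z : ℚ) := by
  -- get r : ℤ[X] with map r = p^2
  have hmem : p ^ 2 ∈ (mapRingHom (Int.castRingHom ℚ)).range := by
    rw [Polynomial.mem_map_range]
    intro n
    obtain ⟨z, hz⟩ := hr n
    exact ⟨z, hz.symm⟩
  obtain ⟨r, hrmap⟩ := hmem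
  -- integer normalization of p
  obtain ⟨b, hb⟩ := IsLocalization.integerNormalization_map_to_map (nonZeroDivisors ℤ) p
  set q : ℤ[X] := IsLocalization.integerNormalization (nonZeroDivisors ℤ) p with hq
  have hb0 : (b : ℤ) ≠ 0 := nonZeroDivisors.coe_ne_zero b
  have hbQ : ((b : ℤ) : ℚ) ≠ 0 := Int.cast_ne_zero.mpr hb0
  have hinj : Function.Injective (Int.castRingHom ℚ) := Int.cast_injective
  have hbsmul : q.map (Int.castRingHom ℚ) = C ((b : ℤ) : ℚ) * p := by
    have h : algebraMap ℤ ℚ = Int.castRingHom ℚ := rfl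
    rw [← h, hb, zsmul_eq_mul]
    push_cast
    rw [Polynomial.C_eq_intCast]
  -- q^2 = (C b)^2 * r
  have hkey : q ^ 2 = (C (b : ℤ)) ^ 2 * r := by
    have hrmap' : r.map (Int.castRingHom ℚ) = p ^ 2 := hrmap
    apply Polynomial.map_injective _ hinj
    rw [Polynomial.map_mul, Polynomial.map_pow, Polynomial.map_pow, hbsmul, map_C, hrmap']
    simp only [Int.coe_castRingHom]
    ring
  have hdvd : C (b : ℤ) ∣ q := by
    rw [← IsIntegrallyClosed.pow_dvd_pow_iff (two_ne_zero)]
    exact ⟨r, hkey⟩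
  obtain ⟨q', hq'⟩ := hdvd
  have hpq : q'.map (Int.castRingHom ℚ) = p := by
    have h1 : C ((b : ℤ) : ℚ) * q'.map (Int.castRingHom ℚ) = C ((b : ℤ) : ℚ) * p := by
      rw [← hbsmul, hq', Polynomial.map_mul, map_C]; rfl
    exact mul_left_cancel₀ (by simpa using hbQ) h1
  intro n
  refine ⟨q'.coeff n, ?_⟩
  rw [← hpq, Polynomial.coeff_map]
  rfl

theorem sq_int_coeffs_imp_int_coeffs (K : Type*) [Field K] [CharZero K]
    (P : Polynomial K) (h0 : P.eval 0 = 1)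
    (hsq : ∀ n : ℕ, ∃ z : ℤ, (P ^ 2).coeff n = (z : K)) :
    ∀ n : ℕ, ∃ z : ℤ, P.coeff n = (z : K) := by
  have ha0 : P.coeff 0 = 1 := by rwa [Polynomial.coeff_zero_eq_eval_zero]
  -- Step 1: all coefficients of P are rational
  have hrat : ∀ n : ℕ, ∃ q : ℚ, P.coeff n = (q : K) := by
    intro n
    induction n using Nat.strong_induction_on with
    | _ n ih =>
      rcases Nat.eq_zero_or_pos n with hn | hn
      · exact ⟨1, by simp [hn, ha0]⟩
      · obtain ⟨z, hz⟩ := hsq n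
        -- a total function choosing rationals for smaller indices
        set qf : ℕ → ℚ := fun k => if h : k < n then (ih k h).choose else 0 with hqfdef
        have hqf : ∀ k, k < n → P.coeff k = (qf k : K) := by
          intro k hk
          simp only [hqfdef, dif_pos hk]
          exact (ih k hk).choose_spec
        have hc : (P ^ 2).coeff n =
            (∑ k ∈ Finset.Ico 1 n, P.coeff k * P.coeff (n - k)) + 2 * P.coeff n := by
          rw [pow_two, Polynomial.coeff_mul,
            Finset.Nat.sum_antidiagonal_eq_sum_range_succ_mk, Finset.sum_range_succ,
            Finset.range_eq_Ico, Finset.sum_eq_sum_Ico_succ_bot hn]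
          simp only [Nat.sub_zero, Nat.sub_self, ha0]
          ring
        set S : ℚ := ∑ k ∈ Finset.Ico 1 n, qf k * qf (n - k) with hS
        have hSK : (∑ k ∈ Finset.Ico 1 n, P.coeff k * P.coeff (n - k)) = (S : K) := by
          rw [hS]
          push_cast
          refine Finset.sum_congr rfl fun k hk => ?_
          obtain ⟨h1, h2⟩ := Finset.mem_Ico.mp hk
          rw [hqf k h2, hqf (n - k) (by omega)]
        refine ⟨(z - S) / 2, ?_⟩
        have h2 : 2 * P.coeff n = (z : K) - (S : K) := by
          rw [← hz, hc, hSK]; ring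
        have : P.coeff n = ((z : K) - (S : K)) / 2 := by
          rw [← h2, mul_div_cancel_left₀ _ (two_ne_zero (α := K))]
        rw [this]
        push_cast
        ring
  -- Step 2: lift P to ℚ[X]
  have hmem : P ∈ (mapRingHom (algebraMap ℚ K)).range := by
    rw [Polynomial.mem_map_range]
    intro k
    obtain ⟨q, hq⟩ := hrat k
    exact ⟨q, by rw [hq]; simp⟩
  obtain ⟨p, hp⟩ := hmem
  have hinj : Function.Injective (algebraMap ℚ K) := (algebraMap ℚ K).injective
  -- p^2 has integer coefficients
  have hp2 : ∀ k : ℕ, ∃ z : ℤ, (p ^ 2).coeff k = (z : ℚ) := by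
    intro k
    obtain ⟨z, hzk⟩ := hsq k
    refine ⟨z, hinj ?_⟩
    have : (p ^ 2).map (algebraMap ℚ K) = P ^ 2 := by
      rw [Polynomial.map_pow]; rw [show p.map (algebraMap ℚ K) = P from hp]
    calc algebraMap ℚ K ((p ^ 2).coeff k) = ((p ^ 2).map (algebraMap ℚ K)).coeff k := by
          rw [Polynomial.coeff_map]
      _ = (P ^ 2).coeff k := by rw [this]
      _ = algebraMap ℚ K ((z : ℚ)) := by rw [hzk]; simp
  -- apply the ℚ lemma
  intro n
  obtain ⟨z, hzn⟩ := rat_sq_int_coeffs p hp2 n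
  refine ⟨z, ?_⟩
  have : P.coeff n = algebraMap ℚ K (p.coeff n) := by
    rw [← show p.map (algebraMap ℚ K) = P from hp, Polynomial.coeff_map]
  rw [this, hzn]
  simp
end

section
/- For every positive integer n, the polynomial Ω_n has integer coefficients, i.e., Ω_n ∈ ℤ[x] when viewed inside ℝ[x]. -/
open Polynomial Polynomial.Chebyshev

/-!
Over `ℂ`, `Ω_d(x) = ∏ (2x - (μ + μ⁻¹))`, where `μ` runs over the primitive `d`-th roots of unity
taken up to inversion. The same product makes sense in the cyclotomic field `ℚ(ζ_d)`. There its
coefficients are algebraic integers, and they are fixed by every Galois automorphism, since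
automorphisms permute the primitive roots. Rational algebraic integers are integers.
-/

open Complex
open scoped Real

def omegaIndex (d : ℕ) : Finset ℕ :=
  (Finset.range (d + 1)).filter (fun k => 1 ≤ k ∧ 2 * k ≤ d ∧ Nat.gcd k d = 1)

/-- `Omega d` over an arbitrary field: `2 cos (2kπ/d)` becomes `μ + μ⁻¹` for a primitive `d`-th
root of unity `μ`; taking the image of `μ ↦ μ + μ⁻¹` identifies `μ` with `μ⁻¹`. -/
noncomputable def omegaPoly (L : Type*) [Field L] [DecidableEq L] (d : ℕ) : L[X] :=
  ∏ c ∈ (primitiveRoots d L).image (fun μ => μ + μ⁻¹), (C 2 * X - C c)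

theorem mem_lifts_int_of_forall_map_eq {K : Type*} [Field K] [CharZero K] [Algebra ℚ K]
    [FiniteDimensional ℚ K] [IsGalois ℚ K] {p : K[X]}
    (hfix : ∀ σ : Gal(K/ℚ), p.map (σ : K →+* K) = p)
    (hint : ∀ i, IsIntegral ℤ (p.coeff i)) : p ∈ lifts (algebraMap ℤ K) := by
  refine (lifts_iff_coeff_lifts _).mpr fun i => ?_
  have hrat : ∃ q : ℚ, p.coeff i = q := by
    obtain ⟨q, hq⟩ := (IsGalois.mem_range_algebraMap_iff_fixed (p.coeff i)).mpr fun σ => by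
      conv_rhs => rw [← hfix σ]
      simp
    exact ⟨q, by simp [← hq]⟩
  obtain ⟨k, hk⟩ := ((hint i).exists_int_iff_exists_rat).mp hrat
  exact ⟨k, by simp [hk]⟩

theorem image_primitiveRoots_of_injective {K L : Type*} [Field K] [Field L] [DecidableEq L]
    {f : K →+* L} (hf : Function.Injective f) {ζ : K} {d : ℕ} (hζ : IsPrimitiveRoot ζ d) :
    (primitiveRoots d K).image f = primitiveRoots d L := by
  obtain rfl | hd := d.eq_zero_or_pos
  · simp
  refine Finset.eq_of_subset_of_card_le (fun x hx => ?_) ?_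
  · obtain ⟨μ, hμ, rfl⟩ := Finset.mem_image.mp hx
    exact (mem_primitiveRoots hd).mpr (((mem_primitiveRoots hd).mp hμ).map_of_injective hf)
  · rw [Finset.card_image_of_injective _ hf, hζ.card_primitiveRoots,
      (hζ.map_of_injective hf).card_primitiveRoots]

section omegaPoly

variable {K L : Type*} [Field K] [Field L] [DecidableEq K] [DecidableEq L]

theorem map_omegaPoly {f : K →+* L} (hf : Function.Injective f) {ζ : K} {d : ℕ}
    (hζ : IsPrimitiveRoot ζ d) : (omegaPoly K d).map f = omegaPoly L d := by
  have himage : ((primitiveRoots d K).image fun μ => μ + μ⁻¹).image f =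
      (primitiveRoots d L).image fun μ => μ + μ⁻¹ := by
    rw [← image_primitiveRoots_of_injective hf hζ, Finset.image_image, Finset.image_image]
    congr 1
    ext μ
    simp
  rw [omegaPoly, omegaPoly, ← himage, Finset.prod_image hf.injOn, Polynomial.map_prod]
  simp [map_ofNat]

omit [DecidableEq L] in
theorem omegaPoly_coeff_isIntegral {d : ℕ} (hd : 0 < d) (i : ℕ) :
    IsIntegral ℤ ((omegaPoly K d).coeff i) := by
  suffices omegaPoly K d ∈ lifts (algebraMap (integralClosure ℤ K) K) by
    obtain ⟨c, hc⟩ := (lifts_iff_coeff_lifts _).mp this i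
    exact hc ▸ c.2
  refine Subsemiring.prod_mem _ fun c hc => ?_
  obtain ⟨μ, hμ, rfl⟩ := Finset.mem_image.mp hc
  have hμ := (mem_primitiveRoots hd).mp hμ
  have hint : IsIntegral ℤ (μ + μ⁻¹) := (hμ.isIntegral hd).add (hμ.inv.isIntegral hd)
  exact ⟨C 2 * X - C ⟨_, hint⟩, by simp; rfl⟩

end omegaPoly

theorem exp_add_inv_eq_two_cos (i d : ℕ) :
    exp (2 * π * I * (i / d)) + (exp (2 * π * I * (i / d)))⁻¹ =
      ((2 * Real.cos (2 * i * π / d) : ℝ) : ℂ) := by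
  rw [← exp_neg]
  push_cast
  rw [Complex.cos]
  ring_nf

theorem cos_two_mul_sub_mul_pi_div (i d : ℕ) (hid : i ≤ d) :
    Real.cos (2 * ((d - i : ℕ) : ℝ) * π / d) = Real.cos (2 * i * π / d) := by
  obtain rfl | hd := eq_or_ne d 0
  · simp [Nat.le_zero.mp hid]
  rw [← Real.cos_two_pi_sub]
  congr 1
  push_cast [hid]
  field_simp
  ring

theorem image_add_inv_primitiveRoots_complex [DecidableEq ℂ] {d : ℕ} (hd : 2 ≤ d) :
    (primitiveRoots d ℂ).image (fun μ => μ + μ⁻¹) =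
      (omegaIndex d).image (fun k : ℕ => ((2 * Real.cos (2 * k * π / d) : ℝ) : ℂ)) := by
  ext c
  simp only [Finset.mem_image, mem_primitiveRoots (by omega : 0 < d),
    Complex.isPrimitiveRoot_iff _ _ (by omega : d ≠ 0), omegaIndex, Finset.mem_filter,
    Finset.mem_range]
  constructor
  · rintro ⟨μ, ⟨i, hid, hi, rfl⟩, rfl⟩
    rw [exp_add_inv_eq_two_cos]
    have hi0 : i ≠ 0 := by
      rintro rfl
      simp only [Nat.coprime_zero_left] at hi
      omega
    by_cases h : 2 * i ≤ d
    · exact ⟨i, ⟨by omega, by omega, h, hi⟩, rfl⟩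
    · refine ⟨d - i, ⟨by omega, by omega, by omega, (Nat.coprime_self_sub_left hid.le).mpr hi⟩, ?_⟩
      rw [cos_two_mul_sub_mul_pi_div i d hid.le]
  · rintro ⟨k, ⟨-, hk1, hk2, hk⟩, rfl⟩
    exact ⟨_, ⟨k, by omega, hk, rfl⟩, exp_add_inv_eq_two_cos k d⟩

theorem injOn_two_cos_omegaIndex (d : ℕ) :
    Set.InjOn (fun k : ℕ => ((2 * Real.cos (2 * k * π / d) : ℝ) : ℂ)) (omegaIndex d) := by
  intro k hk k' hk' h
  simp only [omegaIndex, Finset.coe_filter, Finset.mem_range, Set.mem_ofPred_eq] at hk hk'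
  have hd : (0 : ℝ) < d := by exact_mod_cast (show 0 < d by omega)
  have hmem : ∀ j : ℕ, 2 * j ≤ d → 2 * j * π / d ∈ Set.Icc 0 π := fun j hj => by
    have : (2 * j : ℝ) ≤ d := by exact_mod_cast hj
    constructor
    · positivity
    · rw [div_le_iff₀ hd]; nlinarith [Real.pi_pos]
  have := Real.injOn_cos (hmem k hk.2.2.1) (hmem k' hk'.2.2.1)
    (by simpa using Complex.ofReal_injective h)
  field_simp at this
  exact_mod_cast this

theorem map_Omega_eq_omegaPoly [DecidableEq ℂ] {d : ℕ} (hd : 2 ≤ d) :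
    (Omega d).map (algebraMap ℝ ℂ) = omegaPoly ℂ d := by
  rw [omegaPoly, image_add_inv_primitiveRoots_complex hd,
    Finset.prod_image (injOn_two_cos_omegaIndex d), Omega, if_neg (by omega), Polynomial.map_prod]
  refine Finset.prod_congr rfl fun k _ => ?_
  simp [mul_sub]

theorem omegaPoly_complex_mem_lifts_int [DecidableEq ℂ] {d : ℕ} (hd : 0 < d) :
    omegaPoly ℂ d ∈ lifts (Int.castRingHom ℂ) := by
  classical
  have : NeZero d := ⟨hd.ne'⟩
  -- The global instance is stated for a different (defeq) `Algebra ℚ` structure.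
  have : IsCyclotomicExtension {d} ℚ (CyclotomicField d ℚ) :=
    CyclotomicField.isCyclotomicExtension d ℚ
  have := IsCyclotomicExtension.isGalois {d} ℚ (CyclotomicField d ℚ)
  have := IsCyclotomicExtension.finiteDimensional {d} ℚ (CyclotomicField d ℚ)
  have hζ := IsCyclotomicExtension.zeta_spec d ℚ (CyclotomicField d ℚ)
  obtain ⟨Q, hQ⟩ := (mem_lifts _).mp <| mem_lifts_int_of_forall_map_eq
    (fun σ => map_omegaPoly σ.injective hζ) (omegaPoly_coeff_isIntegral hd)
  let φ : CyclotomicField d ℚ →ₐ[ℚ] ℂ := IsAlgClosed.lift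
  refine (mem_lifts _).mpr ⟨Q, ?_⟩
  rw [← map_omegaPoly (f := (φ : CyclotomicField d ℚ →+* ℂ)) φ.injective hζ, ← hQ,
    map_map]
  congr 1
  exact RingHom.ext_int _ _

theorem omega_integer_coeffs (n : ℕ) (hn : 0 < n) :
    ∃ Q : Polynomial ℤ, Q.map (Int.castRingHom ℝ) = Omega n := by
  obtain rfl | hn2 : n = 1 ∨ 2 ≤ n := by omega
  · exact ⟨X - 1, by simp [Omega]⟩
  classical
  obtain ⟨Q, hQ⟩ := (mem_lifts _).mp (omegaPoly_complex_mem_lifts_int hn)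
  refine ⟨Q, map_injective (algebraMap ℝ ℂ) ofReal_injective ?_⟩
  rw [map_map, map_Omega_eq_omegaPoly hn2, ← hQ]
  congr 1
end

section
/- For every natural number n, the coefficient of x^2 in T_n(x+1) equals n^2(n^2-1)/6 and the coefficient of x^3 equals n^2(n^2-1)(n^2-4)/90, as rational numbers. -/
open Polynomial Polynomial.Chebyshev

theorem aux (n : ℕ) :
    ((T ℚ n).comp (X + 1)).coeff 0 = 1 ∧
    ((T ℚ n).comp (X + 1)).coeff 1 = (n:ℚ)^2 ∧
    ((T ℚ n).comp (X + 1)).coeff 2 = (n:ℚ)^2 * ((n:ℚ)^2-1)/6 ∧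
    ((T ℚ n).comp (X + 1)).coeff 3 = (n:ℚ)^2*((n:ℚ)^2-1)*((n:ℚ)^2-4)/90 := by
  induction n using Nat.twoStepInduction with
  | zero => norm_num [T_zero, coeff_one]
  | one => norm_num [T_one, coeff_X, coeff_one]
  | more n ih ih1 =>
    obtain ⟨a0, a1, a2, a3⟩ := ih
    obtain ⟨b0, b1, b2, b3⟩ := ih1
    have hrec : (T ℚ (n+2)).comp (X+1)
        = 2*(X+1)*((T ℚ (n+1)).comp (X+1)) - (T ℚ n).comp (X+1) := by
      rw [show ((n:ℤ)+2) = (n:ℤ)+2 from rfl, T_add_two]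
      simp [sub_comp, mul_comp]
    have key : ∀ k : ℕ, ((T ℚ (n+2)).comp (X+1)).coeff (k+1)
        = 2*(((T ℚ (n+1)).comp (X+1)).coeff k + ((T ℚ (n+1)).comp (X+1)).coeff (k+1))
          - ((T ℚ n).comp (X+1)).coeff (k+1) := by
      intro k
      rw [hrec]
      simp only [mul_add, add_mul, coeff_sub, coeff_add, mul_one, one_mul]
      rw [show (2:ℚ[X])*X*((T ℚ (↑n+1)).comp (X+1)) = X*(2*((T ℚ (↑n+1)).comp (X+1))) by ring, coeff_X_mul]
      simp [coeff_ofNat_mul]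
    have key0 : ((T ℚ (n+2)).comp (X+1)).coeff 0
        = 2*((T ℚ (n+1)).comp (X+1)).coeff 0 - ((T ℚ n).comp (X+1)).coeff 0 := by
      rw [hrec]
      rw [show (2:ℚ[X])*(X+1)*((T ℚ (↑n+1)).comp (X+1)) = X*(2*((T ℚ (↑n+1)).comp (X+1))) + 2*((T ℚ (↑n+1)).comp (X+1)) by ring]
      simp [mul_coeff_zero, coeff_X_zero]
    push_cast
    push_cast at b0 b1 b2 b3
    refine ⟨?_, ?_, ?_, ?_⟩
    · rw [key0, a0, b0]; norm_num
    · have := key 0; rw [b0, b1, a1] at this; push_cast at this ⊢; rw [this]; ring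
    · have := key 1; rw [b1, b2, a2] at this; push_cast at this ⊢; rw [this]; ring
    · have := key 2; rw [b2, b3, a3] at this; push_cast at this ⊢; rw [this]; ring

theorem chebyshev_comp_add_one_coeff_two_three (n : ℕ) :
    ((T ℚ n).comp (X + 1)).coeff 2 = (n : ℚ) ^ 2 * ((n : ℚ) ^ 2 - 1) / 6 ∧
    ((T ℚ n).comp (X + 1)).coeff 3
      = (n : ℚ) ^ 2 * ((n : ℚ) ^ 2 - 1) * ((n : ℚ) ^ 2 - 4) / 90 := by
  exact ⟨(aux n).2.2.1, (aux n).2.2.2⟩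
end

section
/- For every natural number n and every x in a ℚ-algebra, T_n(x+1) = 1 + Σ_{k=1}^{n} (2^k · ∏_{i=0}^{k-1} (n^2 - i^2) / (2k)!) · x^k. -/
/-! The right-hand side is the Taylor expansion of `T n` at `1`: the Chebyshev differential
equation evaluated at `1` gives `(2k+1) T⁽ᵏ⁺¹⁾(1) = (n² - k²) T⁽ᵏ⁾(1)`, and
`k! · ∏_{l<k} (2l+1) = (2k)! / 2ᵏ` turns `T⁽ᵏ⁾(1) / k!` into the stated coefficient. -/

open Polynomial Polynomial.Chebyshev

open Finset Nat in
theorem Nat.factorial_two_mul_eq_prod_odd (k : ℕ) :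
    (2 * k)! = 2 ^ k * k ! * ∏ l ∈ range k, (2 * l + 1) := by
  induction k with
  | zero => rfl
  | succ k ih =>
    rw [show 2 * (k + 1) = 2 * k + 1 + 1 by ring, factorial_succ, factorial_succ, ih,
      prod_range_succ, factorial_succ]
    ring

theorem Polynomial.aeval_taylor {R S : Type*} [CommSemiring R] [CommSemiring S] [Algebra R S]
    (r : R) (p : R[X]) (x : S) : aeval x (taylor r p) = aeval (x + algebraMap R S r) p := by
  simp [taylor_apply, aeval_comp]

theorem Polynomial.Chebyshev.coeff_taylor_one_T {𝔽 : Type*} [Field 𝔽] [CharZero 𝔽]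
    (n : ℤ) (k : ℕ) :
    (taylor 1 (T 𝔽 n)).coeff k
      = (2 ^ k * ∏ l ∈ Finset.range k, ((n : 𝔽) ^ 2 - (l : 𝔽) ^ 2))
          / (Nat.factorial (2 * k) : 𝔽) := by
  have factorial_mul_hasseDeriv :
      (k.factorial : 𝔽) * (hasseDeriv k (T 𝔽 n)).eval 1 = (derivative^[k] (T 𝔽 n)).eval 1 := by
    rw [← factorial_smul_hasseDeriv, LinearMap.smul_apply, eval_smul, nsmul_eq_mul]
  have iterate_derivative := iterate_derivative_T_eval_one (R := 𝔽) n k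
  rw [taylor_coeff, eq_div_iff (Nat.cast_ne_zero.mpr (Nat.factorial_ne_zero _)),
    Nat.factorial_two_mul_eq_prod_odd]
  push_cast at iterate_derivative ⊢
  rw [← iterate_derivative, ← factorial_mul_hasseDeriv]
  ring

theorem chebyshev_eval_add_one (n : ℕ) (A : Type*) [CommRing A] [Algebra ℚ A] (x : A) :
    Polynomial.aeval (x + 1) (T ℚ n)
      = 1 + ∑ k ∈ Finset.Icc 1 n,
          algebraMap ℚ A ((2 ^ k * ∏ i ∈ Finset.range k, ((n : ℚ) ^ 2 - (i : ℚ) ^ 2))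
            / (Nat.factorial (2 * k) : ℚ)) * x ^ k := by
  have hdeg : (taylor 1 (T ℚ n)).natDegree < n + 1 := by
    rw [natDegree_taylor, natDegree_T, Int.natAbs_natCast]
    exact n.lt_add_one
  rw [show x + 1 = x + algebraMap ℚ A 1 by rw [map_one], ← aeval_taylor,
    aeval_eq_sum_range' hdeg, Finset.sum_range_eq_add_Ico _ n.add_one_pos,
    Finset.Ico_add_one_right_eq_Icc, taylor_coeff_zero, T_eval_one, one_smul, pow_zero]
  congr 1
  refine Finset.sum_congr rfl fun k _ => ?_
  rw [coeff_taylor_one_T, Algebra.smul_def, Int.cast_natCast]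
end

section
/- For every integer i ≥ 2, Ω_{2^i}(x) = 2 · T_{2^{i-2}}(x) as real polynomials, where T is the Chebyshev polynomial of the first kind. -/
/-! For `d = 2 ^ i` the integers `1 ≤ k ≤ d / 2` coprime to `d` are the odd `k = 2 j + 1` with
`j < m := 2 ^ (i - 2)`, so the roots `cos (2 k π / d)` of `Ω_d` are the Chebyshev nodes
`cos ((2 j + 1) π / (2 m))`: exactly the `m` simple roots of `T_m`. Both sides therefore split over
the same roots, and the leading coefficients `2 ^ m = 2 · 2 ^ (m - 1)` agree. -/

open Polynomial Polynomial.Chebyshev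

open Finset Real

theorem T_real_eq_C_mul_prod (n : ℕ) :
    T ℝ n = C (2 ^ (n - 1)) * ∏ k ∈ range n, (X - C (cos ((2 * k + 1) * π / (2 * n)))) := by
  have hinj : Set.InjOn (fun k : ℕ ↦ cos ((2 * k + 1) * π / (2 * n))) (range n) :=
    (range n).nodup_map_iff_injOn.mp (roots_T_real_nodup n)
  have hroots :
      (T ℝ n).roots = (range n).val.map fun k : ℕ ↦ cos ((2 * k + 1) * π / (2 * n)) := by
    rw [roots_T_real, image_val_of_injOn hinj]
  have hcard : Multiset.card (T ℝ n).roots = (T ℝ n).natDegree := by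
    simp [hroots]
  rw [← C_leadingCoeff_mul_prod_multiset_X_sub_C hcard, hroots, Multiset.map_map, leadingCoeff_T,
    Int.natAbs_natCast]
  rfl

theorem filter_gcd_two_pow_eq_image_odd (n : ℕ) :
    (range (2 ^ (n + 2) + 1)).filter (fun k => 1 ≤ k ∧ 2 * k ≤ 2 ^ (n + 2) ∧ k.gcd (2 ^ (n + 2)) = 1)
      = (range (2 ^ n)).image (fun j => 2 * j + 1) := by
  ext k
  simp only [mem_filter, mem_range, mem_image, Nat.coprime_pow_right_iff (Nat.succ_pos _),
    Nat.coprime_two_right]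
  have h4 : 2 ^ (n + 2) = 4 * 2 ^ n := by ring
  constructor
  · rintro ⟨-, -, hk, ⟨j, rfl⟩⟩
    exact ⟨j, by omega, rfl⟩
  · rintro ⟨j, hj, rfl⟩
    exact ⟨by omega, by omega, by omega, odd_two_mul_add_one j⟩

theorem Omega_two_pow_add_two (n : ℕ) :
    Omega (2 ^ (n + 2)) =
      ∏ j ∈ range (2 ^ n), C 2 * (X - C (cos ((2 * j + 1) * π / (2 * (2 ^ n : ℕ))))) := by
  have hne : 2 ^ (n + 2) ≠ 1 := (Nat.one_lt_two_pow (by omega)).ne'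
  rw [Omega, if_neg hne, filter_gcd_two_pow_eq_image_odd,
    prod_image fun a _ b _ h ↦ by simpa using h]
  refine prod_congr rfl fun j _ ↦ ?_
  congr 4
  push_cast
  rw [pow_add]
  field_simp

theorem omega_two_pow (i : ℕ) (hi : 2 ≤ i) :
    Omega (2 ^ i) = 2 * T ℝ (2 ^ (i - 2)) := by
  obtain ⟨n, rfl⟩ := Nat.exists_eq_add_of_le' hi
  have hpos : 1 ≤ 2 ^ n := Nat.one_le_two_pow
  rw [Nat.add_sub_cancel, show (2 : ℤ) ^ n = ((2 ^ n : ℕ) : ℤ) by norm_cast,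
    Omega_two_pow_add_two, T_real_eq_C_mul_prod, prod_mul_distrib, prod_const, card_range, ← C_pow,
    ← mul_assoc, ← C_ofNat, ← Polynomial.C_mul, ← pow_succ', Nat.sub_add_cancel hpos]
end

section
/- Let p be an odd prime, x an integer, and s a positive integer with T_s(x) ≡ 1 (mod p). If p ≥ 5, then (T_{ps}(x) - 1)/(T_s(x) - 1) ≡ p^2 (mod p^3), where the quotient is taken as an integer (T_s(x) - 1 divides T_{ps}(x) - 1 in ℤ). -/
open Polynomial Polynomial.Chebyshev

lemma cheb_derivs (n : ℤ) :
    (T ℤ n).eval 1 = 1 ∧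
    (derivative (T ℤ n)).eval 1 = n ^ 2 ∧
    3 * (derivative (derivative (T ℤ n))).eval 1 = n ^ 2 * (n ^ 2 - 1) ∧
    15 * (derivative (derivative (derivative (T ℤ n)))).eval 1
      = n ^ 2 * (n ^ 2 - 1) * (n ^ 2 - 4) := by
  induction n using Polynomial.Chebyshev.induct with
  | zero => simp
  | one => simp
  | add_two n ih1 ih2 =>
    obtain ⟨a1, b1, c1, d1⟩ := ih1
    obtain ⟨a2, b2, c2, d2⟩ := ih2
    rw [T_add_two]
    simp only [derivative_sub, derivative_add, derivative_mul, derivative_ofNat, derivative_X,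
      eval_sub, eval_mul, eval_add, eval_ofNat, eval_X, eval_one, derivative_zero,
      zero_mul, mul_one, one_mul, zero_add, add_zero, mul_zero]
    refine ⟨by linear_combination 2 * a1 - a2, ?_, ?_, ?_⟩
    · push_cast; linear_combination 2 * a1 + 2 * b1 - b2; 
    · push_cast; linear_combination 12 * b1 + 2 * c1 - c2
    · push_cast; linear_combination 30 * c1 + 2 * d1 - d2
  | neg_add_one n ih1 ih2 =>
    obtain ⟨a1, b1, c1, d1⟩ := ih1
    obtain ⟨a2, b2, c2, d2⟩ := ih2
    have key : T ℤ (-n - 1) = 2 * X * T ℤ (-n) - T ℤ (-n + 1) := by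
      have := T_sub_one ℤ (-n); simpa using this
    rw [key]
    simp only [derivative_sub, derivative_add, derivative_mul, derivative_ofNat, derivative_X,
      eval_sub, eval_mul, eval_add, eval_ofNat, eval_X, eval_one, derivative_zero,
      zero_mul, mul_one, one_mul, zero_add, add_zero, mul_zero]
    refine ⟨by linear_combination 2 * a1 - a2, ?_, ?_, ?_⟩
    · push_cast; linear_combination 2 * a1 + 2 * b1 - b2
    · push_cast; linear_combination 12 * b1 + 2 * c1 - c2
    · push_cast; linear_combination 30 * c1 + 2 * d1 - d2

theorem chebyshev_quotient_cong (p : ℕ) (hp : p.Prime) (hp5 : 5 ≤ p) (x : ℤ) (s : ℕ)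
    (hs : 0 < s) (h : (T ℤ s).eval x ≡ 1 [ZMOD p]) :
    ∃ q : ℤ, (T ℤ (p * s)).eval x - 1 = q * ((T ℤ s).eval x - 1) ∧
      q ≡ (p : ℤ) ^ 2 [ZMOD (p : ℤ) ^ 3] := by
  set y : ℤ := (T ℤ s).eval x - 1 with hy
  have hpy : (p : ℤ) ∣ y := (Int.ModEq.dvd h.symm)
  set Q : ℤ[X] := taylor (1 : ℤ) (T ℤ (p : ℤ)) with hQ
  obtain ⟨eA, eB, eC, eD⟩ := cheb_derivs (p : ℤ)
  have c0 : Q.coeff 0 = 1 := by rw [hQ, taylor_coeff_zero]; exact eA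
  have c1 : Q.coeff 1 = (p : ℤ) ^ 2 := by rw [hQ, taylor_coeff_one]; exact eB
  have hDk : ∀ k : ℕ, (k.factorial : ℤ) * Q.coeff k = ((derivative^[k]) (T ℤ (p:ℤ))).eval 1 := by
    intro k
    rw [hQ, taylor_coeff, ← Polynomial.factorial_smul_hasseDeriv]
    simp [eval_smul, nsmul_eq_mul]
  have e2 : 6 * Q.coeff 2 = (p:ℤ)^2 * ((p:ℤ)^2 - 1) := by
    have := hDk 2
    simp only [Nat.factorial_two, Nat.cast_ofNat] at this
    have h2 : ((derivative^[2]) (T ℤ (p:ℤ))).eval 1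
        = (derivative (derivative (T ℤ (p:ℤ)))).eval 1 := by
      simp [Function.iterate_succ_apply', Function.iterate_zero_apply]
    rw [h2] at this
    linear_combination 3 * this + eC
  have e3 : 90 * Q.coeff 3 = (p:ℤ)^2 * ((p:ℤ)^2 - 1) * ((p:ℤ)^2 - 4) := by
    have := hDk 3
    norm_num [Nat.factorial] at this
    linear_combination 15 * this + eD
  -- divisibility of coefficients
  have hpd6 : ¬ (p ∣ 6) := by
    intro hd
    have h6 := Nat.le_of_dvd (by norm_num) hd
    interval_cases p <;> revert hp hd <;> decide
  have hcop6 : IsCoprime ((p : ℤ) ^ 2) 6 := by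
    have : Nat.Coprime (p ^ 2) 6 := (hp.coprime_iff_not_dvd.mpr hpd6).pow_left 2
    have := Nat.isCoprime_iff_coprime.mpr this
    push_cast at this
    exact this
  have hc2 : (p : ℤ) ^ 2 ∣ Q.coeff 2 := by
    have hd : (p : ℤ) ^ 2 ∣ 6 * Q.coeff 2 := e2 ▸ ⟨(p:ℤ)^2 - 1, rfl⟩
    exact hcop6.dvd_of_dvd_mul_left hd
  have hc3 : (p : ℤ) ∣ Q.coeff 3 := by
    by_cases hp5' : p = 5
    · subst hp5'
      norm_num at e3
      have : Q.coeff 3 = 140 := by omega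
      rw [this]; norm_num
    · have hpd90 : ¬ (p ∣ 90) := by
        intro hd
        have : p ∣ 2 * (3 ^ 2 * 5) := by norm_num; exact hd
        rcases (Nat.Prime.dvd_mul hp).mp this with h1 | h1
        · have := Nat.le_of_dvd (by norm_num) h1; omega
        rcases (Nat.Prime.dvd_mul hp).mp h1 with h2 | h2
        · have := Nat.le_of_dvd (by norm_num) (hp.dvd_of_dvd_pow h2); omega
        · have := Nat.le_of_dvd (by norm_num) h2
          interval_cases p <;> simp_all
      have hcop90 : IsCoprime ((p : ℤ)) 90 := by
        have := Nat.isCoprime_iff_coprime.mpr (hp.coprime_iff_not_dvd.mpr hpd90)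
        push_cast at this
        exact this
      have hd : (p : ℤ) ∣ 90 * Q.coeff 3 := by
        rw [e3]
        exact dvd_mul_of_dvd_left (dvd_mul_of_dvd_left (dvd_pow_self _ two_ne_zero) _) _
      exact hcop90.dvd_of_dvd_mul_left hd
  -- decompose Q
  have hdvd : (X : ℤ[X]) ^ 4 ∣
      Q - (C (Q.coeff 0) + C (Q.coeff 1) * X + C (Q.coeff 2) * X ^ 2 + C (Q.coeff 3) * X ^ 3) := by
    rw [Polynomial.X_pow_dvd_iff]
    intro d hd
    interval_cases d <;>
      · simp only [coeff_sub, coeff_add, coeff_C_mul, coeff_X_pow, coeff_C, coeff_X]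
        norm_num
  obtain ⟨Rp, hR⟩ := hdvd
  have hRe : Q.eval y = Q.coeff 0 + Q.coeff 1 * y + Q.coeff 2 * y ^ 2 + Q.coeff 3 * y ^ 3
      + y ^ 4 * Rp.eval y := by
    have := congrArg (Polynomial.eval y) hR
    simp only [eval_sub, eval_add, eval_mul, eval_pow, eval_C, eval_X] at this
    linear_combination this
  have hps : (T ℤ ((p : ℤ) * (s : ℤ))).eval x = Q.eval y := by
    rw [T_mul, eval_comp, hQ, taylor_eval]
    congr 1
    rw [hy]; ring
  obtain ⟨y1, hy1⟩ := hpy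
  obtain ⟨a2, ha2⟩ := hc2
  obtain ⟨a3, ha3⟩ := hc3
  refine ⟨(p : ℤ) ^ 2 + Q.coeff 2 * y + Q.coeff 3 * y ^ 2 + y ^ 3 * Rp.eval y, ?_, ?_⟩
  · linear_combination hps + hRe + c0 + y * c1
  · rw [Int.modEq_iff_dvd]
    refine ⟨-(a2 * y1 + a3 * y1 ^ 2 + y1 ^ 3 * Rp.eval y), ?_⟩
    linear_combination (-y) * ha2 + (-y ^ 2) * ha3 +
      (-((p : ℤ) ^ 2 * a2 + (p : ℤ) * a3 * (y + (p : ℤ) * y1)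
        + Rp.eval y * (y ^ 2 + (p : ℤ) * y * y1 + (p : ℤ) ^ 2 * y1 ^ 2))) * hy1
end
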